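/- arXiv:2412.18556 — 7 statements merged into one kernel-verified Lean document; each statement's English description precedes it below -/
import Mathlib

section
/- Let A, B, X, Y be nonempty finite types. Let (E^x)_{x∈X} be a POVM on A and, for each x∈X, let (F^{x,y})_{y∈Y} be a POVM on B. Define P^y := Σ_{x∈X} E^x ⊗ F^{x,y} on A⊗B and G^{y,y'} := Σ_{x∈X} E^x ⊗ F^{x,y} ⊗ F^{x,y'} on A⊗B⊗E with E a copy of B. Then (G^{y,y'})_{(y,y')∈Y×Y} is a POVM on A⊗B⊗E, for every y∈Y one has Σ_{y'∈Y} G^{y,y'} = P^y ⊗ I_E, and for all y,y'∈Y the matrix obtained from G^{y,y'} by swapping the B and E tensor factors (i.e., the matrix whose ((a,b,e),(a',b',e')) entry is G^{y,y'}((a,e,b),(a',e',b'))) equals G^{y',y}. In particular, every POVM realizable by local operations and one-way classical communication is two-extendible. -/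
open Matrix Kronecker ComplexOrder

lemma my_kron_conjT {m n p q : Type*} (C : Matrix m n ℂ) (D : Matrix p q ℂ) :
    (C ⊗ₖ D)ᴴ = Cᴴ ⊗ₖ Dᴴ := by
  ext i j
  simp [conjTranspose_apply, kroneckerMap_apply, mul_comm]

lemma my_kron_psd {m n : Type*} [Fintype m] [Fintype n] [DecidableEq m] [DecidableEq n]
    {M : Matrix m m ℂ} {N : Matrix n n ℂ} (hM : M.PosSemidef) (hN : N.PosSemidef) :
    (M ⊗ₖ N).PosSemidef := by
  exact hM.kronecker hN

lemma my_sum_kron {ι l m n p : Type*} (s : Finset ι)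
    (f : ι → Matrix l m ℂ) (B : Matrix n p ℂ) :
    (∑ x ∈ s, f x) ⊗ₖ B = ∑ x ∈ s, f x ⊗ₖ B := by
  ext i j
  simp [kroneckerMap_apply, Matrix.sum_apply, Finset.sum_mul]

lemma my_kron_sum {ι l m n p : Type*} (s : Finset ι)
    (A : Matrix l m ℂ) (f : ι → Matrix n p ℂ) :
    A ⊗ₖ (∑ x ∈ s, f x) = ∑ x ∈ s, A ⊗ₖ f x := by
  ext i j
  simp [kroneckerMap_apply, Matrix.sum_apply, Finset.mul_sum]

/-- Every POVM realizable by local operations and one-way classical communication is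
two-extendible: the explicit extension `G^{y,y'} = Σ_x E^x ⊗ F^{x,y} ⊗ F^{x,y'}` is a POVM,
marginalizes to `P^y ⊗ I_E`, and is covariant under swapping the `B` and `E` factors. -/
theorem two_extendible_of_one_way_LOCC
    (A B X Y : Type) [Fintype A] [DecidableEq A] [Nonempty A]
    [Fintype B] [DecidableEq B] [Nonempty B]
    [Fintype X] [Nonempty X]
    [Fintype Y] [DecidableEq Y] [Nonempty Y]
    (E : X → Matrix A A ℂ) (F : X → Y → Matrix B B ℂ)
    (hEpos : ∀ x, (E x).PosSemidef) (hEsum : ∑ x, E x = 1)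
    (hFpos : ∀ x y, (F x y).PosSemidef) (hFsum : ∀ x, ∑ y, F x y = 1)
    (P : Y → Matrix (A × B) (A × B) ℂ) (hP : ∀ y, P y = ∑ x, E x ⊗ₖ F x y)
    (G : Y → Y → Matrix (A × B × B) (A × B × B) ℂ)
    (hG : ∀ y y', G y y' = ∑ x, E x ⊗ₖ (F x y ⊗ₖ F x y')) :
    ((∀ y y', (G y y').PosSemidef) ∧ ∑ p : Y × Y, G p.1 p.2 = 1)
      ∧ (∀ y, ∑ y', G y y' =
          Matrix.of fun (p q : A × B × B) =>
            P y (p.1, p.2.1) (q.1, q.2.1) * (if p.2.2 = q.2.2 then (1 : ℂ) else 0))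
      ∧ (∀ y y',
          (Matrix.of fun (p q : A × B × B) =>
            G y y' (p.1, p.2.2, p.2.1) (q.1, q.2.2, q.2.1)) = G y' y) := by
  have hmarg : ∀ y, ∑ y', G y y' = ∑ x, E x ⊗ₖ (F x y ⊗ₖ (1 : Matrix B B ℂ)) := by
    intro y
    simp only [hG]
    rw [Finset.sum_comm]
    refine Finset.sum_congr rfl fun x _ => ?_
    rw [← my_kron_sum, ← my_kron_sum, hFsum x]
  refine ⟨⟨?_, ?_⟩, ?_, ?_⟩
  · intro y y'
    rw [hG]
    refine Finset.sum_induction _ _ (fun a b ha hb => ha.add hb) Matrix.PosSemidef.zero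
      fun x _ => my_kron_psd (hEpos x) (my_kron_psd (hFpos x y) (hFpos x y'))
  · rw [Fintype.sum_prod_type]
    calc ∑ y, ∑ y', G y y'
        = ∑ y, ∑ x, E x ⊗ₖ (F x y ⊗ₖ (1 : Matrix B B ℂ)) := by
          exact Finset.sum_congr rfl fun y _ => hmarg y
      _ = ∑ x, E x ⊗ₖ ((1 : Matrix B B ℂ) ⊗ₖ (1 : Matrix B B ℂ)) := by
          rw [Finset.sum_comm]
          refine Finset.sum_congr rfl fun x _ => ?_
          rw [← my_kron_sum, ← my_sum_kron, hFsum x]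
      _ = 1 := by
          rw [← my_sum_kron, hEsum, one_kronecker_one, one_kronecker_one]
  · intro y
    rw [hmarg y]
    ext i j
    simp [Matrix.sum_apply, kroneckerMap_apply, hP, Finset.sum_mul, mul_assoc, Matrix.one_apply]
  · intro y y'
    ext i j
    simp only [hG, Matrix.of_apply, Matrix.sum_apply, kroneckerMap_apply]
    exact Finset.sum_congr rfl fun x _ => by ring
end

section
/- Let A, B, X, Y be nonempty finite types and k ≥ 2 an integer. Let (E^x)_{x∈X} be a POVM on A and, for each x∈X, let (F^{x,y})_{y∈Y} be a POVM on B. For v : Fin k → Y define G^v := Σ_{x∈X} E^x ⊗ (⊗_{i=1}^{k} F^{x,v_i}) on A⊗B^{⊗k}, and set P^y := Σ_{x∈X} E^x ⊗ F^{x,y} on A⊗B. Then (G^v)_{v∈Y^k} is a POVM on A⊗B^{⊗k} and satisfies: (i) for every y∈Y, Σ_{(y_2,…,y_k)∈Y^{k−1}} G^{(y,y_2,…,y_k)} = P^y ⊗ I_{B^{⊗(k−1)}}; (ii) for every (y_1,…,y_{k−1})∈Y^{k−1}, Σ_{y_k∈Y} Tr_A[G^{(y_1,…,y_k)}] = (1/|B|)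 Σ_{y_k∈Y} Tr_{A,B_k}[G^{(y_1,…,y_k)}] ⊗ I_{B_k}, where B_k is the last B-factor; (iii) for every permutation π of {1,…,k}, conjugating G^{(y_{π(1)},…,y_{π(k)})} by the permutation unitary W^π acting on the k B-factors yields G^{(y_1,…,y_k)}. In particular, every POVM realizable by local operations and one-way classical communication is k-extendible. -/
open Matrix Kronecker ComplexOrder

lemma sum_prod_pi' {k : ℕ} {Y : Type} [Fintype Y] (g : Fin k → Y → ℂ) :
    ∑ v : Fin k → Y, ∏ i, g i (v i) = ∏ i, ∑ y, g i y := (Fintype.prod_sum g).symm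

lemma filter_sum_prod' {k : ℕ} {Y : Type} [Fintype Y] [DecidableEq Y] (i0 : Fin k) (y : Y)
    (g : Fin k → Y → ℂ) :
    ∑ v ∈ Finset.univ.filter (fun v : Fin k → Y => v i0 = y), ∏ i, g i (v i)
      = g i0 y * ∏ i ∈ Finset.univ.erase i0, ∑ y', g i y' := by
  classical
  rw [Finset.sum_filter]
  have h1 : ∀ v : Fin k → Y, (if v i0 = y then ∏ i, g i (v i) else 0)
      = ∏ i, (if i = i0 then (if v i = y then g i (v i) else 0) else g i (v i)) := by
    intro v
    by_cases h : v i0 = y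
    · rw [if_pos h]
      refine Finset.prod_congr rfl fun i _ => ?_
      split_ifs with h2 h3
      · rfl
      · exact absurd (h2 ▸ h) h3
      · rfl
    · rw [if_neg h, eq_comm]
      exact Finset.prod_eq_zero (Finset.mem_univ i0) (by simp [h])
  simp_rw [h1]
  rw [← Fintype.prod_sum (fun i y' => if i = i0 then (if y' = y then g i y' else 0) else g i y'),
    ← Finset.mul_prod_erase Finset.univ _ (Finset.mem_univ i0)]
  congr 1
  · simp
  · exact Finset.prod_congr rfl fun i hi => by simp [Finset.ne_of_mem_erase hi]

open scoped MatrixOrder in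
lemma posSemidef_iff_eq_transpose_mul_self {n : Type} [Fintype n] [DecidableEq n]
    {M : Matrix n n ℂ} : M.PosSemidef ↔ ∃ B : Matrix n n ℂ, M = Bᴴ * B := by
  constructor
  · intro hM
    obtain ⟨B, hB⟩ := CStarAlgebra.nonneg_iff_eq_star_mul_self.mp hM.nonneg
    exact ⟨B, hB⟩
  · rintro ⟨B, rfl⟩
    exact posSemidef_conjTranspose_mul_self B

lemma psd_tensor' {k : ℕ} {A B : Type} [Fintype A] [DecidableEq A] [Fintype B] [DecidableEq B]
    (EM : Matrix A A ℂ) (FM : Fin k → Matrix B B ℂ)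
    (hE : EM.PosSemidef) (hF : ∀ i, (FM i).PosSemidef) :
    (Matrix.of fun (p q : A × (Fin k → B)) =>
      EM p.1 q.1 * ∏ i, FM i (p.2 i) (q.2 i)).PosSemidef := by
  obtain ⟨C, hC⟩ := posSemidef_iff_eq_transpose_mul_self.mp hE
  choose D hD using fun i => posSemidef_iff_eq_transpose_mul_self.mp (hF i)
  rw [posSemidef_iff_eq_transpose_mul_self]
  refine ⟨Matrix.of fun (r p : A × (Fin k → B)) => C r.1 p.1 * ∏ i, D i (r.2 i) (p.2 i), ?_⟩
  ext p q
  simp only [Matrix.mul_apply, Matrix.conjTranspose_apply, Matrix.of_apply, hC, hD]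
  rw [Fintype.sum_prod_type]
  rw [Fintype.prod_sum (fun i b => star (D i b (p.2 i)) * D i b (q.2 i)), Finset.sum_mul_sum]
  refine Finset.sum_congr rfl fun a0 _ => Finset.sum_congr rfl fun f0 _ => ?_
  simp only [star_mul', star_prod, Finset.prod_mul_distrib]
  ring

/-- Every POVM realizable by local operations and one-way classical communication is
`k`-extendible: the explicit extension `G^v = Σ_x E^x ⊗ (⊗_i F^{x,v_i})` is a POVM
and satisfies the marginal, non-signaling, and permutation-covariance conditions. -/
theorem k_extendible_of_one_way_LOCC
    (A B X Y : Type) [Fintype A] [DecidableEq A] [Nonempty A]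
    [Fintype B] [DecidableEq B] [Nonempty B]
    [Fintype X] [Nonempty X]
    [Fintype Y] [DecidableEq Y] [Nonempty Y]
    (k : ℕ) (hk : 2 ≤ k)
    (E : X → Matrix A A ℂ) (F : X → Y → Matrix B B ℂ)
    (hEpos : ∀ x, (E x).PosSemidef) (hEsum : ∑ x, E x = 1)
    (hFpos : ∀ x y, (F x y).PosSemidef) (hFsum : ∀ x, ∑ y, F x y = 1)
    (P : Y → Matrix (A × B) (A × B) ℂ) (hP : ∀ y, P y = ∑ x, E x ⊗ₖ F x y)
    (G : (Fin k → Y) → Matrix (A × (Fin k → B)) (A × (Fin k → B)) ℂ)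
    (hG : ∀ v, G v = Matrix.of fun (p q : A × (Fin k → B)) =>
        ∑ x, E x p.1 q.1 * ∏ i, F x (v i) (p.2 i) (q.2 i)) :
    -- (G^v)_{v ∈ Y^k} is a POVM on A ⊗ B^{⊗k}
    ((∀ v, (G v).PosSemidef) ∧ ∑ v : Fin k → Y, G v = 1)
    -- (i) marginal condition: summing over all but the first outcome gives P^y ⊗ I
    ∧ (∀ y : Y,
        ∑ v ∈ Finset.univ.filter (fun v : Fin k → Y => v ⟨0, by omega⟩ = y), G v
          = Matrix.of fun (p q : A × (Fin k → B)) =>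
              P y (p.1, p.2 ⟨0, by omega⟩) (q.1, q.2 ⟨0, by omega⟩)
                * ∏ i ∈ Finset.univ.erase (⟨0, by omega⟩ : Fin k),
                    (if p.2 i = q.2 i then (1 : ℂ) else 0))
    -- (ii) non-signaling condition on the last B-factor
    ∧ (∀ u : Fin k → Y, ∀ f f' : Fin k → B,
        (∑ yk : Y, ∑ a : A, G (Function.update u ⟨k - 1, by omega⟩ yk) (a, f) (a, f'))
          = (Fintype.card B : ℂ)⁻¹
            * (∑ yk : Y, ∑ a : A, ∑ b : B,
                G (Function.update u ⟨k - 1, by omega⟩ yk)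
                  (a, Function.update f ⟨k - 1, by omega⟩ b)
                  (a, Function.update f' ⟨k - 1, by omega⟩ b))
            * (if f ⟨k - 1, by omega⟩ = f' ⟨k - 1, by omega⟩ then 1 else 0))
    -- (iii) permutation covariance
    ∧ (∀ v : Fin k → Y, ∀ π : Equiv.Perm (Fin k),
        (Matrix.of fun (p q : A × (Fin k → B)) =>
          G (v ∘ π) (p.1, p.2 ∘ π) (q.1, q.2 ∘ π)) = G v) := by
  classical
  have hF1 : ∀ (x : X) (b b' : B), ∑ y, F x y b b' = if b = b' then (1 : ℂ) else 0 := by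
    intro x b b'
    have := congrArg (fun M : Matrix B B ℂ => M b b') (hFsum x)
    simpa [Matrix.sum_apply, Matrix.one_apply] using this
  refine ⟨⟨?_, ?_⟩, ?_, ?_, ?_⟩
  · -- positive semidefinite
    intro v
    rw [hG]
    have hrw : (Matrix.of fun (p q : A × (Fin k → B)) =>
          ∑ x, E x p.1 q.1 * ∏ i, F x (v i) (p.2 i) (q.2 i))
        = ∑ x, Matrix.of fun (p q : A × (Fin k → B)) =>
            E x p.1 q.1 * ∏ i, F x (v i) (p.2 i) (q.2 i) := by
      ext p q; simp [Matrix.sum_apply]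
    rw [hrw]
    exact Finset.sum_induction _ _ (fun a b ha hb => ha.add hb) Matrix.PosSemidef.zero
      (fun x _ => psd_tensor' (E x) (fun i => F x (v i)) (hEpos x) (fun i => hFpos x (v i)))
  · -- sums to the identity
    ext p q
    rw [Matrix.sum_apply]
    simp only [hG, Matrix.of_apply]
    rw [Finset.sum_comm]
    have key : ∀ x, ∑ v : Fin k → Y, E x p.1 q.1 * ∏ i, F x (v i) (p.2 i) (q.2 i)
        = E x p.1 q.1 * ∏ i, (if p.2 i = q.2 i then (1 : ℂ) else 0) := by
      intro x
      rw [← Finset.mul_sum, sum_prod_pi' (fun i y => F x y (p.2 i) (q.2 i))]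
      exact congrArg _ (Finset.prod_congr rfl fun i _ => hF1 x _ _)
    simp_rw [key]
    rw [← Finset.sum_mul]
    have hE1 : ∑ x, E x p.1 q.1 = (if p.1 = q.1 then (1 : ℂ) else 0) := by
      have := congrArg (fun M : Matrix A A ℂ => M p.1 q.1) hEsum
      simpa [Matrix.sum_apply, Matrix.one_apply] using this
    rw [hE1, Finset.prod_boole, Matrix.one_apply]
    by_cases h1 : p.1 = q.1 <;> by_cases h2 : ∀ i, p.2 i = q.2 i <;>
      simp [h1, h2, Prod.ext_iff, funext_iff]
  · -- (i) marginal condition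
    intro y
    ext p q
    rw [Matrix.sum_apply]
    simp only [hG, Matrix.of_apply, hP, Matrix.sum_apply, Matrix.kroneckerMap_apply]
    rw [Finset.sum_comm]
    have key : ∀ x, (∑ v ∈ Finset.univ.filter (fun v : Fin k → Y => v ⟨0, by omega⟩ = y),
          E x p.1 q.1 * ∏ i, F x (v i) (p.2 i) (q.2 i))
        = E x p.1 q.1 * F x y (p.2 ⟨0, by omega⟩) (q.2 ⟨0, by omega⟩)
            * ∏ i ∈ Finset.univ.erase (⟨0, by omega⟩ : Fin k),
                (if p.2 i = q.2 i then (1 : ℂ) else 0) := by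
      intro x
      rw [← Finset.mul_sum,
        filter_sum_prod' (⟨0, by omega⟩ : Fin k) y (fun i y' => F x y' (p.2 i) (q.2 i))]
      rw [← mul_assoc]
      exact congrArg _ (Finset.prod_congr rfl fun i _ => hF1 x _ _)
    simp_rw [key]
    rw [← Finset.sum_mul]
  · -- (ii) non-signaling
    intro u f f'
    have hB0 : (Fintype.card B : ℂ) ≠ 0 := Nat.cast_ne_zero.mpr Fintype.card_ne_zero
    set ik : Fin k := ⟨k - 1, by omega⟩ with hik
    set Q : X → ℂ := fun x => ∏ i ∈ Finset.univ.erase ik, F x (u i) (f i) (f' i) with hQ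
    have hsplit : ∀ (yk : Y) (x : X) (g g' : Fin k → B),
        ∏ i, F x (Function.update u ik yk i) (g i) (g' i)
          = F x yk (g ik) (g' ik) * ∏ i ∈ Finset.univ.erase ik, F x (u i) (g i) (g' i) := by
      intro yk x g g'
      rw [← Finset.mul_prod_erase Finset.univ _ (Finset.mem_univ ik), Function.update_self]
      congr 1
      exact Finset.prod_congr rfl fun i hi => by
        rw [Function.update_of_ne (Finset.ne_of_mem_erase hi)]
    have reorder : ∀ c : X → Y → ℂ,
        (∑ yk : Y, ∑ a : A, ∑ x, E x a a * (c x yk * Q x))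
          = ∑ x, (∑ a, E x a a) * ((∑ yk, c x yk) * Q x) := by
      intro c
      calc (∑ yk : Y, ∑ a : A, ∑ x, E x a a * (c x yk * Q x))
          = ∑ a : A, ∑ yk : Y, ∑ x, E x a a * (c x yk * Q x) := Finset.sum_comm
        _ = ∑ a : A, ∑ x, ∑ yk : Y, E x a a * (c x yk * Q x) :=
            Finset.sum_congr rfl fun a _ => Finset.sum_comm
        _ = ∑ x, ∑ a : A, ∑ yk : Y, E x a a * (c x yk * Q x) := Finset.sum_comm
        _ = ∑ x, (∑ a, E x a a) * ((∑ yk, c x yk) * Q x) := by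
            simp_rw [← Finset.mul_sum, ← Finset.sum_mul]
    have hL : (∑ yk : Y, ∑ a : A, G (Function.update u ik yk) (a, f) (a, f'))
        = (∑ x, (∑ a, E x a a) * Q x) * (if f ik = f' ik then (1 : ℂ) else 0) := by
      simp only [hG, Matrix.of_apply]
      simp_rw [hsplit]
      rw [reorder (fun x yk => F x yk (f ik) (f' ik))]
      simp_rw [hF1]
      rw [Finset.sum_mul]
      exact Finset.sum_congr rfl fun x _ => by ring
    have hsplit2 : ∀ (yk : Y) (x : X) (b : B),
        ∏ i, F x (Function.update u ik yk i)
            (Function.update f ik b i) (Function.update f' ik b i)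
          = F x yk b b * Q x := by
      intro yk x b
      rw [hsplit, Function.update_self, Function.update_self]
      congr 1
      exact Finset.prod_congr rfl fun i hi => by
        rw [Function.update_of_ne (Finset.ne_of_mem_erase hi),
          Function.update_of_ne (Finset.ne_of_mem_erase hi)]
    have hR : (∑ yk : Y, ∑ a : A, ∑ b : B,
          G (Function.update u ik yk) (a, Function.update f ik b) (a, Function.update f' ik b))
        = (Fintype.card B : ℂ) * ∑ x, (∑ a, E x a a) * Q x := by
      simp only [hG, Matrix.of_apply]
      simp_rw [hsplit2]
      have hswap : ∀ (yk : Y) (a : A),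
          (∑ b : B, ∑ x, E x a a * (F x yk b b * Q x))
            = ∑ x, E x a a * ((∑ b, F x yk b b) * Q x) := by
        intro yk a
        rw [Finset.sum_comm]
        simp_rw [← Finset.mul_sum, ← Finset.sum_mul]
      simp_rw [hswap]
      rw [reorder (fun x yk => ∑ b, F x yk b b)]
      have htr : ∀ x : X, (∑ yk, ∑ b, F x yk b b) = (Fintype.card B : ℂ) := by
        intro x
        rw [Finset.sum_comm]
        simp [hF1]
      simp_rw [htr]
      rw [Finset.mul_sum]
      exact Finset.sum_congr rfl fun x _ => by ring
    rw [hL, hR]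
    rw [← mul_assoc, inv_mul_cancel₀ hB0, one_mul]
  · -- (iii) permutation covariance
    intro v π
    ext p q
    simp only [hG, Matrix.of_apply, Function.comp_apply]
    refine Finset.sum_congr rfl fun x _ => ?_
    exact congrArg _ (Equiv.prod_comp π (fun i => F x (v i) (p.2 i) (q.2 i)))
end

section
/- Let A, B, X, Y be nonempty finite types and k ≥ 1 an integer. Let (E^x)_{x∈X} be a POVM on A and, for each x∈X, let (F^{x,y})_{y∈Y} be a POVM on B. For v : Fin k → Y define G^v := Σ_{x∈X} E^x ⊗ (⊗_{i=1}^{k} F^{x,v_i}) on A⊗B^{⊗k}. Then for every v∈Y^k and every i∈{1,…,k}, the partial transpose of G^v on the first i B-factors, namely Σ_{x∈X} E^x ⊗ (⊗_{j=1}^{i} (F^{x,v_j})ᵀ) ⊗ (⊗_{j=i+1}^{k} F^{x,v_j}), is positive semidefinite. In particular, every POVM realizable by local operations and one-way classical communication is k-PPT-extendible. -/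
open Matrix Kronecker ComplexOrder

open scoped MatrixOrder in
lemma Matrix.PosSemidef.exists_sqrt {n : Type} [Fintype n] [DecidableEq n] {M : Matrix n n ℂ}
    (hM : M.PosSemidef) : ∃ X : Matrix n n ℂ, X.PosSemidef ∧ X * X = M := by
  exact ⟨CFC.sqrt M, (CFC.sqrt_nonneg M).posSemidef, CFC.sqrt_mul_sqrt_self M hM.nonneg⟩

noncomputable def Matrix.PosSemidef.sqrt {n : Type} [Fintype n] [DecidableEq n] {M : Matrix n n ℂ}
    (hM : M.PosSemidef) : Matrix n n ℂ := Classical.choose hM.exists_sqrt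

lemma Matrix.PosSemidef.posSemidef_sqrt {n : Type} [Fintype n] [DecidableEq n]
    {M : Matrix n n ℂ} (hM : M.PosSemidef) : hM.sqrt.PosSemidef :=
  (Classical.choose_spec hM.exists_sqrt).1

lemma Matrix.PosSemidef.sqrt_mul_self {n : Type} [Fintype n] [DecidableEq n]
    {M : Matrix n n ℂ} (hM : M.PosSemidef) : hM.sqrt * hM.sqrt = M :=
  (Classical.choose_spec hM.exists_sqrt).2

/-- Gram expansion of a PSD matrix via its square root. -/
lemma psd_entry_sum {n : Type} [Fintype n] [DecidableEq n] {M : Matrix n n ℂ}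
    (hM : M.PosSemidef) (p q : n) :
    M p q = ∑ b, star (hM.sqrt b p) * (hM.sqrt b q) := by
  conv_lhs => rw [← hM.sqrt_mul_self]
  rw [Matrix.mul_apply]
  refine Finset.sum_congr rfl fun b _ => ?_
  rw [hM.posSemidef_sqrt.isHermitian.apply]

lemma psd_entry_sum' {n : Type} [Fintype n] [DecidableEq n] {M : Matrix n n ℂ}
    (hM : M.PosSemidef) (p q : n) :
    M q p = ∑ b, (hM.sqrt b p) * star (hM.sqrt b q) := by
  rw [psd_entry_sum hM q p]
  exact Finset.sum_congr rfl fun b _ => mul_comm _ _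

/-- Every POVM realizable by local operations and one-way classical communication is
`k`-PPT-extendible: the partial transpose of `G^v = Σ_x E^x ⊗ (⊗_i F^{x,v_i})` on the
first `i` B-factors is positive semidefinite for every `i ∈ {1,…,k}`. -/
theorem k_PPT_extendible_of_one_way_LOCC
    (A B X Y : Type) [Fintype A] [DecidableEq A] [Nonempty A]
    [Fintype B] [DecidableEq B] [Nonempty B]
    [Fintype X] [Nonempty X]
    [Fintype Y] [DecidableEq Y] [Nonempty Y]
    (k : ℕ) (hk : 1 ≤ k)
    (E : X → Matrix A A ℂ) (F : X → Y → Matrix B B ℂ)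
    (hEpos : ∀ x, (E x).PosSemidef) (hEsum : ∑ x, E x = 1)
    (hFpos : ∀ x y, (F x y).PosSemidef) (hFsum : ∀ x, ∑ y, F x y = 1)
    (G : (Fin k → Y) → Matrix (A × (Fin k → B)) (A × (Fin k → B)) ℂ)
    (hG : ∀ v, G v = Matrix.of fun (p q : A × (Fin k → B)) =>
        ∑ x, E x p.1 q.1 * ∏ i, F x (v i) (p.2 i) (q.2 i)) :
    ∀ v : Fin k → Y, ∀ i : ℕ, 1 ≤ i → i ≤ k →
      Matrix.PosSemidef (Matrix.of fun (p q : A × (Fin k → B)) =>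
        ∑ x, E x p.1 q.1 *
          ∏ j : Fin k,
            (if (j : ℕ) < i then F x (v j) (q.2 j) (p.2 j)
             else F x (v j) (p.2 j) (q.2 j))) := by
  intro v i _ _
  set W : Matrix (X × A × (Fin k → B)) (A × (Fin k → B)) ℂ :=
    Matrix.of fun r p =>
      (hEpos r.1).sqrt r.2.1 p.1 *
        ∏ j : Fin k,
          (if (j : ℕ) < i then star ((hFpos r.1 (v j)).sqrt (r.2.2 j) (p.2 j))
           else (hFpos r.1 (v j)).sqrt (r.2.2 j) (p.2 j)) with hW
  have key : (Matrix.of fun (p q : A × (Fin k → B)) =>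
        ∑ x, E x p.1 q.1 *
          ∏ j : Fin k,
            (if (j : ℕ) < i then F x (v j) (q.2 j) (p.2 j)
             else F x (v j) (p.2 j) (q.2 j))) = Wᴴ * W := by
    ext p q
    rw [Matrix.mul_apply]
    rw [Fintype.sum_prod_type]
    simp only [Matrix.of_apply, Matrix.conjTranspose_apply, hW]
    refine Finset.sum_congr rfl fun x _ => ?_
    rw [psd_entry_sum (hEpos x) p.1 q.1, Finset.sum_mul]
    rw [Fintype.sum_prod_type]
    refine Finset.sum_congr rfl fun a _ => ?_
    have hexp := Fintype.prod_sum (fun (j : Fin k) (b : B) =>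
      if (j : ℕ) < i then
        ((hFpos x (v j)).sqrt b (p.2 j)) * star ((hFpos x (v j)).sqrt b (q.2 j))
      else star ((hFpos x (v j)).sqrt b (p.2 j)) * ((hFpos x (v j)).sqrt b (q.2 j)))
    have hprod : (∏ j : Fin k,
        (if (j : ℕ) < i then F x (v j) (q.2 j) (p.2 j)
         else F x (v j) (p.2 j) (q.2 j))) =
        ∑ c : Fin k → B, ∏ j : Fin k,
          (if (j : ℕ) < i then
            ((hFpos x (v j)).sqrt (c j) (p.2 j)) * star ((hFpos x (v j)).sqrt (c j) (q.2 j))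
          else star ((hFpos x (v j)).sqrt (c j) (p.2 j)) * ((hFpos x (v j)).sqrt (c j) (q.2 j))) := by
      rw [← hexp]
      refine Finset.prod_congr rfl fun j _ => ?_
      by_cases hj : (j : ℕ) < i
      · simp only [hj, if_true]
        exact psd_entry_sum' (hFpos x (v j)) (p.2 j) (q.2 j)
      · simp only [hj, if_false]
        exact psd_entry_sum (hFpos x (v j)) (p.2 j) (q.2 j)
    rw [hprod, Finset.mul_sum]
    refine Finset.sum_congr rfl fun c _ => ?_
    simp only [Matrix.of_apply, star_mul', star_prod, apply_ite star, star_star]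
    rw [mul_mul_mul_comm, ← Finset.prod_mul_distrib]
    congr 1
    refine Finset.prod_congr rfl fun j _ => ?_
    by_cases hj : (j : ℕ) < i <;> simp [hj]
  rw [key]
  exact Matrix.posSemidef_conjTranspose_mul_self W
end

section
/- Let d ≥ 1 be an integer and, with ζ := exp(2πi/d), X the d×d cyclic-shift matrix, Z the d×d clock matrix, Φ := (1/d)Σ_{i,j=0}^{d−1}|ii⟩⟨jj|, and Φ^{(a,b)} := (X^aZ^b⊗I)Φ(X^aZ^b⊗I)† for (a,b)∈(ZMod d)², set P^y := ½Φ^y + (1/(2d²))I for y∈Y := (ZMod d)². Define, on ℂ^d⊗ℂ^d⊗ℂ^d with factors labeled A, B, E, the matrices G^{y,y'} := (1/(2d²))(Φ^y_{AB}⊗I_E) + (1/(2d²))(Φ^{y'}_{AE}⊗I_B), where Φ^{y'}_{AE}⊗I_B is the matrix with entries ((a,b,e),(a',b',e')) ↦ Φ^{y'}((a,e),(a',e'))·δ_{b,b'}. Then (G^{y,y'})_{(y,y')∈Y×Y} is a POVM, Σ_{y'∈Y} G^{y,y'} = P^y ⊗ I_E for every y∈Y, and the matrix obtained from G^{y,y'}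 by swapping the B and E tensor factors equals G^{y',y}; i.e., the POVM (P^y)_{y∈Y} is two-extendible. -/
open Matrix Kronecker ComplexOrder

section Helpers

private lemma outer_psd {n : Type*} [Fintype n] (c : ℝ) (hc : 0 ≤ c) (w : n → ℂ) :
    (Matrix.of fun p q => (c : ℂ) * w p * (starRingEnd ℂ) (w q)).PosSemidef := by
  refine Matrix.PosSemidef.of_dotProduct_mulVec_nonneg ?_ ?_
  · ext p q
    simp only [Matrix.conjTranspose_apply, Matrix.of_apply, star_mul', Complex.star_def,
      Complex.conj_conj, Complex.conj_ofReal, _root_.map_mul]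
    ring
  · intro x
    have key : (star x) ⬝ᵥ ((Matrix.of fun p q => (c : ℂ) * w p * (starRingEnd ℂ) (w q)) *ᵥ x)
        = (c : ℂ) * ((starRingEnd ℂ) (∑ q, (starRingEnd ℂ) (w q) * x q)
            * (∑ q, (starRingEnd ℂ) (w q) * x q)) := by
      simp only [dotProduct, Matrix.mulVec, Matrix.of_apply, map_sum, _root_.map_mul,
        Complex.conj_conj, Finset.mul_sum, Finset.sum_mul, Pi.star_apply, Complex.star_def]
      rw [Finset.sum_comm]
      refine Finset.sum_congr rfl fun p _ => Finset.sum_congr rfl fun q _ => ?_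
      ring
    rw [key, mul_comm ((starRingEnd ℂ) _), Complex.mul_conj]
    have : (c : ℂ) * (Complex.normSq (∑ q, (starRingEnd ℂ) (w q) * x q) : ℂ)
        = ((c * Complex.normSq (∑ q, (starRingEnd ℂ) (w q) * x q) : ℝ) : ℂ) := by
      push_cast; ring
    rw [this]
    exact Complex.zero_le_real.mpr (mul_nonneg hc (Complex.normSq_nonneg _))

private lemma conj_outer {n : Type*} [Fintype n] (c : ℂ) (w : n → ℂ) (M : Matrix n n ℂ) :
    M * (Matrix.of fun p q => c * w p * (starRingEnd ℂ) (w q)) * Mᴴ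
      = Matrix.of fun p q => c * (M *ᵥ w) p * (starRingEnd ℂ) ((M *ᵥ w) q) := by
  ext p q
  simp only [Matrix.mul_apply, Matrix.conjTranspose_apply, Matrix.of_apply, Matrix.mulVec,
    dotProduct, map_sum, _root_.map_mul, Finset.mul_sum, Finset.sum_mul, Complex.star_def]
  refine Finset.sum_congr rfl fun s _ => Finset.sum_congr rfl fun r _ => ?_
  ring

private lemma kron_one_psd {ι μ : Type*} [Fintype ι] [Fintype μ] [DecidableEq μ]
    {A : Matrix ι ι ℂ} (hA : A.PosSemidef) :
    (A ⊗ₖ (1 : Matrix μ μ ℂ)).PosSemidef := by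
  refine Matrix.PosSemidef.of_dotProduct_mulVec_nonneg ?_ ?_
  · ext ⟨i, j⟩ ⟨k, l⟩
    simp only [Matrix.conjTranspose_apply, Matrix.kroneckerMap_apply, Matrix.one_apply,
      star_mul']
    rw [show star (A k i) = Aᴴ i k from rfl, hA.1.eq]
    by_cases h : l = j
    · subst h; simp
    · rw [if_neg h, if_neg (mt Eq.symm h)]; simp
  · intro x
    have key : (star x) ⬝ᵥ ((A ⊗ₖ (1 : Matrix μ μ ℂ)) *ᵥ x)
        = ∑ j : μ, (star fun i => x (i, j)) ⬝ᵥ (A *ᵥ fun i => x (i, j)) := by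
      simp only [dotProduct, Matrix.mulVec, Matrix.kroneckerMap_apply, Matrix.one_apply,
        Fintype.sum_prod_type, Pi.star_apply, mul_ite, mul_one, mul_zero, ite_mul, zero_mul,
        Finset.sum_ite_eq, Finset.mem_univ, if_true, Finset.mul_sum]
      rw [Finset.sum_comm]
    rw [key]
    exact Finset.sum_nonneg fun j _ => hA.dotProduct_mulVec_nonneg _

private lemma psd_extend {ι κ μ : Type*} [Fintype ι] [Fintype κ] [Fintype μ] [DecidableEq μ]
    {A : Matrix ι ι ℂ} (hA : A.PosSemidef) (f : κ → ι) (g : κ → μ) :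
    (Matrix.of fun p q => A (f p) (f q) * (if g p = g q then (1:ℂ) else 0)).PosSemidef := by
  have h : (Matrix.of fun p q => A (f p) (f q) * (if g p = g q then (1:ℂ) else 0))
      = (A ⊗ₖ (1 : Matrix μ μ ℂ)).submatrix (fun p => (f p, g p)) (fun p => (f p, g p)) := by
    ext p q
    simp [Matrix.submatrix_apply, Matrix.kroneckerMap_apply, Matrix.one_apply]
  rw [h]
  exact (kron_one_psd hA).submatrix _

private lemma smul_psd {c : ℝ} (hc : 0 ≤ c) {n : Type*} [Fintype n]
    {M : Matrix n n ℂ} (hM : M.PosSemidef) : ((c : ℂ) • M).PosSemidef := by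
  refine Matrix.PosSemidef.of_dotProduct_mulVec_nonneg ?_ ?_
  · unfold Matrix.IsHermitian
    rw [Matrix.conjTranspose_smul, hM.1.eq]
    congr 1
    simp [Complex.conj_ofReal]
  · intro x
    rw [Matrix.smul_mulVec, dotProduct_smul, smul_eq_mul]
    exact mul_nonneg (Complex.zero_le_real.mpr hc) (hM.dotProduct_mulVec_nonneg x)

end Helpers

/-- The POVM `(½Φ^y + (1/(2d²))I)_{y ∈ (ZMod d)²}` is two-extendible, with two-extension
`G^{y,y'} = (1/(2d²)) Φ^y_{AB} ⊗ I_E + (1/(2d²)) Φ^{y'}_{AE} ⊗ I_B`. -/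
theorem bell_POVM_two_extendible
    (d : ℕ) [NeZero d]
    (ζ : ℂ) (hζ : ζ = Complex.exp (2 * Real.pi * Complex.I / d))
    (Xm Zm : Matrix (Fin d) (Fin d) ℂ)
    (hX : Xm = Matrix.of fun (i j : Fin d) => if (i : ℕ) = ((j : ℕ) + 1) % d then 1 else 0)
    (hZ : Zm = Matrix.of fun (i j : Fin d) => if i = j then ζ ^ (i : ℕ) else 0)
    (Φ : Matrix (Fin d × Fin d) (Fin d × Fin d) ℂ)
    (hΦ : Φ = Matrix.of fun (p q : Fin d × Fin d) =>
        if p.1 = p.2 ∧ q.1 = q.2 then (d : ℂ)⁻¹ else 0)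
    (Φb : ZMod d × ZMod d → Matrix (Fin d × Fin d) (Fin d × Fin d) ℂ)
    (hΦb : ∀ ab : ZMod d × ZMod d,
        Φb ab = ((Xm ^ ab.1.val * Zm ^ ab.2.val) ⊗ₖ (1 : Matrix (Fin d) (Fin d) ℂ)) * Φ
          * ((Xm ^ ab.1.val * Zm ^ ab.2.val) ⊗ₖ (1 : Matrix (Fin d) (Fin d) ℂ))ᴴ)
    (P : ZMod d × ZMod d → Matrix (Fin d × Fin d) (Fin d × Fin d) ℂ)
    (hP : ∀ y, P y = (2 : ℂ)⁻¹ • Φb y + (2 * (d : ℂ) ^ 2)⁻¹ • 1)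
    (G : ZMod d × ZMod d → ZMod d × ZMod d →
        Matrix (Fin d × Fin d × Fin d) (Fin d × Fin d × Fin d) ℂ)
    (hG : ∀ y y', G y y' = Matrix.of fun (p q : Fin d × Fin d × Fin d) =>
        (2 * (d : ℂ) ^ 2)⁻¹ * (Φb y (p.1, p.2.1) (q.1, q.2.1)
            * (if p.2.2 = q.2.2 then 1 else 0))
        + (2 * (d : ℂ) ^ 2)⁻¹ * (Φb y' (p.1, p.2.2) (q.1, q.2.2)
            * (if p.2.1 = q.2.1 then 1 else 0))) :
    -- (G^{y,y'}) is a POVM on A ⊗ B ⊗ E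
    ((∀ y y', (G y y').PosSemidef)
      ∧ ∑ p : (ZMod d × ZMod d) × (ZMod d × ZMod d), G p.1 p.2 = 1)
    -- marginal condition: Σ_{y'} G^{y,y'} = P^y ⊗ I_E
    ∧ (∀ y, ∑ y' : ZMod d × ZMod d, G y y' =
        Matrix.of fun (p q : Fin d × Fin d × Fin d) =>
          P y (p.1, p.2.1) (q.1, q.2.1) * (if p.2.2 = q.2.2 then (1 : ℂ) else 0))
    -- swapping the B and E factors exchanges y and y'
    ∧ (∀ y y',
        (Matrix.of fun (p q : Fin d × Fin d × Fin d) =>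
          G y y' (p.1, p.2.2, p.2.1) (q.1, q.2.2, q.2.1)) = G y' y) := by
  have hdpos : 0 < d := Nat.pos_of_ne_zero (NeZero.ne d)
  have hd0 : (d : ℂ) ≠ 0 := Nat.cast_ne_zero.mpr (NeZero.ne d)
  have hprim : IsPrimitiveRoot ζ d := hζ ▸ Complex.isPrimitiveRoot_exp d (NeZero.ne d)
  have hζd : ζ ^ d = 1 := hprim.pow_eq_one
  have hζ0 : ζ ≠ 0 := by
    intro h
    rw [h, zero_pow (NeZero.ne d)] at hζd
    exact zero_ne_one hζd
  have hconj : (starRingEnd ℂ) ζ = ζ⁻¹ := by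
    have h1 : ζ * (starRingEnd ℂ) ζ = (Complex.normSq ζ : ℂ) := Complex.mul_conj ζ
    have h2 : ‖ζ‖ = 1 := hprim.norm'_eq_one (NeZero.ne d)
    have h3 : Complex.normSq ζ = 1 := by
      have := Complex.sq_norm ζ
      rw [h2] at this
      simpa using this.symm
    have h4 : (starRingEnd ℂ) ζ * ζ = 1 := by
      rw [mul_comm, h1, h3, Complex.ofReal_one]
    exact eq_inv_of_mul_eq_one_left h4
  -- geometric sum of powers of a root of unity
  have hgeo : ∀ m : ℤ, ∑ b ∈ Finset.range d, (ζ ^ m) ^ b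
      = if (d : ℤ) ∣ m then (d : ℂ) else 0 := by
    intro m
    by_cases h : (d : ℤ) ∣ m
    · rw [if_pos h, (hprim.zpow_eq_one_iff_dvd m).mpr h]
      simp
    · have h1 : ζ ^ m ≠ 1 := fun hh => h ((hprim.zpow_eq_one_iff_dvd m).mp hh)
      rw [if_neg h, geom_sum_eq h1]
      have h2 : (ζ ^ m) ^ d = 1 := by
        rw [← _root_.zpow_natCast (ζ ^ m) d, ← _root_.zpow_mul, mul_comm, _root_.zpow_mul,
          _root_.zpow_natCast, hζd, _root_.one_zpow]
      rw [h2]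
      simp
  -- sums over `ZMod d` as sums over `range d`
  have hzsum : ∀ f : ℕ → ℂ, ∑ a : ZMod d, f a.val = ∑ b ∈ Finset.range d, f b := by
    intro f
    refine Finset.sum_nbij' (fun a => a.val) (fun b => (b : ZMod d)) ?_ ?_ ?_ ?_ ?_
    · intro a _; exact Finset.mem_range.mpr (ZMod.val_lt a)
    · intro b _; exact Finset.mem_univ _
    · intro a _; exact ZMod.natCast_zmod_val a
    · intro b hb; exact ZMod.val_natCast_of_lt (Finset.mem_range.mp hb)
    · intro a _; rfl
  -- powers of the shift matrix
  have hXpow : ∀ a : ℕ, Xm ^ a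
      = Matrix.of fun i j : Fin d => if (i : ℕ) = ((j : ℕ) + a) % d then 1 else 0 := by
    intro a
    induction a with
    | zero =>
      ext i j
      simp [Matrix.one_apply, Nat.mod_eq_of_lt j.isLt, Fin.ext_iff]
    | succ a ih =>
      ext i j
      rw [pow_succ, ih, hX]
      simp only [Matrix.mul_apply, Matrix.of_apply]
      have hk : ((j : ℕ) + 1) % d < d := Nat.mod_lt _ hdpos
      rw [Finset.sum_eq_single (⟨((j : ℕ) + 1) % d, hk⟩ : Fin d)]
      · norm_num
        rw [show (j : ℕ) + 1 + a = (j : ℕ) + (a + 1) from by omega]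
      · intro k _ hkne
        have : ¬ ((k : ℕ) = ((j : ℕ) + 1) % d) := fun hh => hkne (Fin.ext hh)
        simp [this]
      · intro h
        exact absurd (Finset.mem_univ _) h
  -- powers of the clock matrix
  have hZd : Zm = Matrix.diagonal fun i : Fin d => ζ ^ (i : ℕ) := by
    rw [hZ]
    ext i j
    simp [Matrix.diagonal_apply]
  have hZpow : ∀ b : ℕ, Zm ^ b = Matrix.diagonal fun i : Fin d => ζ ^ ((i : ℕ) * b) := by
    intro b
    rw [hZd, Matrix.diagonal_pow]
    ext i j
    by_cases h : i = j <;> simp [Matrix.diagonal_apply, h, pow_mul]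
  -- entries of the unitaries
  have hU : ∀ (y : ZMod d × ZMod d) (i j : Fin d),
      (Xm ^ y.1.val * Zm ^ y.2.val) i j
        = (if (i : ℕ) = ((j : ℕ) + y.1.val) % d then 1 else 0) * ζ ^ ((j : ℕ) * y.2.val) := by
    intro y i j
    rw [hXpow, hZpow, Matrix.mul_diagonal]
    rfl
  -- outer-product form of Φ
  have hΦo : Φ = Matrix.of fun p q : Fin d × Fin d =>
      (d : ℂ)⁻¹ * (fun r : Fin d × Fin d => if r.1 = r.2 then (1:ℂ) else 0) p
        * (starRingEnd ℂ) ((fun r : Fin d × Fin d => if r.1 = r.2 then (1:ℂ) else 0) q) := by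
    rw [hΦ]
    ext p q
    by_cases h1 : p.1 = p.2 <;> by_cases h2 : q.1 = q.2 <;> simp [h1, h2]
  -- mulVec of the Kronecker with the maximally entangled vector
  have hmv : ∀ (M : Matrix (Fin d) (Fin d) ℂ) (p : Fin d × Fin d),
      ((M ⊗ₖ (1 : Matrix (Fin d) (Fin d) ℂ)) *ᵥ
        fun r : Fin d × Fin d => if r.1 = r.2 then (1:ℂ) else 0) p = M p.1 p.2 := by
    intro M p
    simp [Matrix.mulVec, dotProduct, Fintype.sum_prod_type, Matrix.kroneckerMap_apply,
      Matrix.one_apply, mul_ite, ite_mul, mul_one, mul_zero, zero_mul,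
      Finset.sum_ite_eq, Finset.sum_ite_eq']
  -- entries of the Bell projectors
  have hΦbe : ∀ y : ZMod d × ZMod d, Φb y = Matrix.of fun p q : Fin d × Fin d =>
      (d : ℂ)⁻¹ * (Xm ^ y.1.val * Zm ^ y.2.val) p.1 p.2
        * (starRingEnd ℂ) ((Xm ^ y.1.val * Zm ^ y.2.val) q.1 q.2) := by
    intro y
    rw [hΦb y, hΦo, conj_outer]
    ext p q
    rw [Matrix.of_apply, Matrix.of_apply, hmv, hmv]
  -- Φb y is positive semidefinite
  have hpsdΦb : ∀ y : ZMod d × ZMod d, (Φb y).PosSemidef := by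
    intro y
    have key := outer_psd (n := Fin d × Fin d) (d : ℝ)⁻¹ (by positivity)
      (fun p => (Xm ^ y.1.val * Zm ^ y.2.val) p.1 p.2)
    have heq : Φb y = Matrix.of fun p q : Fin d × Fin d =>
        (((d : ℝ)⁻¹ : ℝ) : ℂ) * (Xm ^ y.1.val * Zm ^ y.2.val) p.1 p.2
          * (starRingEnd ℂ) ((Xm ^ y.1.val * Zm ^ y.2.val) q.1 q.2) := by
      rw [hΦbe y]
      ext p q
      push_cast
      rfl
    rw [heq]
    exact key
  -- the condition in the X-power entries, in terms of ZMod
  have hcond : ∀ (i j : Fin d) (a : ZMod d),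
      ((i : ℕ) = ((j : ℕ) + a.val) % d) ↔ a = ((i : ℕ) : ZMod d) - ((j : ℕ) : ZMod d) := by
    intro i j a
    have hval : (((j : ℕ) : ZMod d) + a).val = ((j : ℕ) + a.val) % d := by
      rw [ZMod.val_add, ZMod.val_natCast_of_lt j.isLt]
    constructor
    · intro h
      have h2 : ((i : ℕ) : ZMod d) = ((j : ℕ) : ZMod d) + a :=
        calc ((i : ℕ) : ZMod d) = ((((j : ℕ) + a.val) % d : ℕ) : ZMod d) := by rw [h]
        _ = (((j : ℕ) + a.val : ℕ) : ZMod d) := ZMod.natCast_mod _ d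
        _ = ((j : ℕ) : ZMod d) + ((a.val : ℕ) : ZMod d) := by push_cast; ring
        _ = ((j : ℕ) : ZMod d) + a := by rw [ZMod.natCast_zmod_val]
      rw [h2]
      ring
    · intro h
      subst h
      rw [← hval]
      have : ((j : ℕ) : ZMod d) + (((i : ℕ) : ZMod d) - ((j : ℕ) : ZMod d))
          = ((i : ℕ) : ZMod d) := by ring
      rw [this, ZMod.val_natCast_of_lt i.isLt]
  have hcastinj : ∀ i k : Fin d, (((i : ℕ) : ZMod d) = ((k : ℕ) : ZMod d)) ↔ i = k := by
    intro i k
    constructor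
    · intro h
      have := congrArg ZMod.val h
      rw [ZMod.val_natCast_of_lt i.isLt, ZMod.val_natCast_of_lt k.isLt] at this
      exact Fin.ext this
    · rintro rfl; rfl
  -- THE KEY: sum of all Bell projectors is the identity
  have hsum : ∑ y : ZMod d × ZMod d, Φb y = 1 := by
    ext p q
    obtain ⟨i, j⟩ := p
    obtain ⟨k, l⟩ := q
    rw [Matrix.sum_apply, Matrix.one_apply]
    have hpow : ∀ b : ℕ, ζ ^ ((j : ℕ) * b) * ζ⁻¹ ^ ((l : ℕ) * b)
        = (ζ ^ (((j : ℕ) : ℤ) - ((l : ℕ) : ℤ))) ^ b := by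
      intro b
      rw [← _root_.zpow_natCast (ζ ^ (((j : ℕ) : ℤ) - ((l : ℕ) : ℤ))) b, ← _root_.zpow_mul,
        ← _root_.zpow_natCast ζ ((j : ℕ) * b), ← _root_.zpow_natCast ζ⁻¹ ((l : ℕ) * b),
        _root_.inv_zpow, ← _root_.zpow_neg, ← zpow_add₀ hζ0]
      congr 1
      push_cast
      ring
    have h1 : ∀ y : ZMod d × ZMod d, Φb y (i, j) (k, l)
        = (d : ℂ)⁻¹ * ((if y.1 = ((i : ℕ) : ZMod d) - ((j : ℕ) : ZMod d) then (1:ℂ) else 0)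
            * (if y.1 = ((k : ℕ) : ZMod d) - ((l : ℕ) : ZMod d) then (1:ℂ) else 0))
          * (ζ ^ ((j : ℕ) * y.2.val) * ζ⁻¹ ^ ((l : ℕ) * y.2.val)) := by
      intro y
      rw [hΦbe y]
      simp only [Matrix.of_apply, hU]
      rw [_root_.map_mul, map_pow (starRingEnd ℂ) ζ, hconj]
      simp only [apply_ite (starRingEnd ℂ), _root_.map_one, _root_.map_zero]
      simp only [hcond i j y.1, hcond k l y.1]
      ring
    simp only [h1]
    rw [Fintype.sum_prod_type]
    have h2 : ∀ a : ZMod d, ∑ b : ZMod d,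
        ((d : ℂ)⁻¹ * ((if a = ((i : ℕ) : ZMod d) - ((j : ℕ) : ZMod d) then (1:ℂ) else 0)
            * (if a = ((k : ℕ) : ZMod d) - ((l : ℕ) : ZMod d) then (1:ℂ) else 0))
          * (ζ ^ ((j : ℕ) * b.val) * ζ⁻¹ ^ ((l : ℕ) * b.val)))
        = ((d : ℂ)⁻¹ * ((if a = ((i : ℕ) : ZMod d) - ((j : ℕ) : ZMod d) then (1:ℂ) else 0)
            * (if a = ((k : ℕ) : ZMod d) - ((l : ℕ) : ZMod d) then (1:ℂ) else 0)))
          * (if (d : ℤ) ∣ (((j : ℕ) : ℤ) - ((l : ℕ) : ℤ)) then (d : ℂ) else 0) := by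
      intro a
      rw [Finset.sum_congr rfl (fun b _ => by rw [hpow b.val]), ← Finset.mul_sum,
        hzsum (fun n => (ζ ^ (((j : ℕ) : ℤ) - ((l : ℕ) : ℤ))) ^ n), hgeo]
    simp only [h2]
    by_cases hjl : j = l
    · subst hjl
      rw [if_pos (by simp)]
      have h3 : ∀ a : ZMod d,
          (d : ℂ)⁻¹ * ((if a = ((i : ℕ) : ZMod d) - ((j : ℕ) : ZMod d) then (1:ℂ) else 0)
            * (if a = ((k : ℕ) : ZMod d) - ((j : ℕ) : ZMod d) then (1:ℂ) else 0)) * (d : ℂ)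
          = (if a = ((i : ℕ) : ZMod d) - ((j : ℕ) : ZMod d) then (1:ℂ) else 0)
            * (if a = ((k : ℕ) : ZMod d) - ((j : ℕ) : ZMod d) then (1:ℂ) else 0) := by
        intro a
        field_simp
      simp only [h3]
      by_cases hik : i = k
      · subst hik
        rw [if_pos rfl]
        rw [Finset.sum_eq_single (((i : ℕ) : ZMod d) - ((j : ℕ) : ZMod d))]
        · simp
        · intro a _ ha; simp [ha]
        · intro h; exact absurd (Finset.mem_univ _) h
      · rw [if_neg (by simp [Prod.ext_iff, hik])]
        refine Finset.sum_eq_zero fun a _ => ?_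
        by_cases h : a = ((i : ℕ) : ZMod d) - ((j : ℕ) : ZMod d)
        · have hnk : ¬ (a = ((k : ℕ) : ZMod d) - ((j : ℕ) : ZMod d)) := by
            intro hh
            rw [h] at hh
            exact hik ((hcastinj i k).mp (sub_left_inj.mp hh))
          have hikc : ¬ (((i : ℕ) : ZMod d) = ((k : ℕ) : ZMod d)) :=
            fun hh => hik ((hcastinj i k).mp hh)
          simp [h, hnk, hikc]
        · simp [h]
    · have hnd : ¬ ((d : ℤ) ∣ (((j : ℕ) : ℤ) - ((l : ℕ) : ℤ))) := by
        intro hdvd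
        have hj := j.isLt
        have hl := l.isLt
        have : ((j : ℕ) : ℤ) - ((l : ℕ) : ℤ) = 0 :=
          Int.eq_zero_of_abs_lt_dvd hdvd (by rw [abs_lt]; omega)
        apply hjl
        apply Fin.ext
        omega
      rw [if_neg hnd, if_neg (by simp [Prod.ext_iff, hjl])]
      simp
  -- sum of the P's is the identity
  have hPsum : ∑ y : ZMod d × ZMod d, P y = 1 := by
    ext p q
    rw [Matrix.sum_apply]
    simp only [hP, Matrix.add_apply, Matrix.smul_apply, smul_eq_mul]
    rw [Finset.sum_add_distrib, ← Finset.mul_sum,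
      show (∑ y : ZMod d × ZMod d, Φb y p q) = (∑ y : ZMod d × ZMod d, Φb y) p q from
        (Matrix.sum_apply _ _ _ _).symm, hsum, Finset.sum_const, Finset.card_univ,
      Fintype.card_prod, ZMod.card, nsmul_eq_mul]
    simp only [Matrix.one_apply]
    by_cases h : p = q
    · simp only [if_pos h]
      push_cast
      field_simp
      ring
    · simp only [if_neg h]
      push_cast
      ring
  -- marginal condition
  have hmarg : ∀ y, ∑ y' : ZMod d × ZMod d, G y y' =
      Matrix.of fun (p q : Fin d × Fin d × Fin d) =>
        P y (p.1, p.2.1) (q.1, q.2.1) * (if p.2.2 = q.2.2 then (1 : ℂ) else 0) := by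
    intro y
    obtain ⟨y1, y2⟩ := y
    ext p q
    obtain ⟨p1, p2, p3⟩ := p
    obtain ⟨q1, q2, q3⟩ := q
    rw [Matrix.sum_apply]
    simp only [hG, Matrix.of_apply]
    rw [Finset.sum_add_distrib, Finset.sum_const, Finset.card_univ, Fintype.card_prod,
      ZMod.card, ← Finset.mul_sum, ← Finset.sum_mul,
      show (∑ y' : ZMod d × ZMod d, Φb y' (p1, p3) (q1, q3))
          = (∑ y' : ZMod d × ZMod d, Φb y') (p1, p3) (q1, q3) from
        (Matrix.sum_apply _ _ _ _).symm, hsum, hP]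
    simp only [Matrix.add_apply, Matrix.smul_apply, smul_eq_mul, Matrix.one_apply,
      nsmul_eq_mul, Matrix.of_apply, Prod.mk.injEq]
    push_cast
    by_cases h1 : p1 = q1 <;> by_cases h2 : p2 = q2 <;> by_cases h3 : p3 = q3 <;>
      simp only [h1, h2, h3, and_true, and_false, true_and, false_and, if_true, if_false,
        not_true, not_false_iff, eq_self_iff_true, if_pos, if_neg, mul_one, mul_zero,
        zero_mul, add_zero, zero_add] <;>
      field_simp <;> ring
  -- total sum is the identity
  have htot : ∑ p : (ZMod d × ZMod d) × (ZMod d × ZMod d), G p.1 p.2 = 1 := by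
    rw [Fintype.sum_prod_type]
    calc ∑ y : ZMod d × ZMod d, ∑ y' : ZMod d × ZMod d, G y y'
        = ∑ y : ZMod d × ZMod d, Matrix.of (fun p q : Fin d × Fin d × Fin d =>
            P y (p.1, p.2.1) (q.1, q.2.1) * (if p.2.2 = q.2.2 then (1:ℂ) else 0)) :=
          Finset.sum_congr rfl fun y _ => hmarg y
      _ = 1 := by
          ext p q
          rw [Matrix.sum_apply]
          simp only [Matrix.of_apply]
          rw [← Finset.sum_mul,
            show (∑ y : ZMod d × ZMod d, P y (p.1, p.2.1) (q.1, q.2.1))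
                = (∑ y : ZMod d × ZMod d, P y) (p.1, p.2.1) (q.1, q.2.1) from
              (Matrix.sum_apply _ _ _ _).symm, hPsum]
          obtain ⟨p1, p2, p3⟩ := p
          obtain ⟨q1, q2, q3⟩ := q
          simp only [Matrix.one_apply, Prod.mk.injEq]
          by_cases h1 : p1 = q1 <;> by_cases h2 : p2 = q2 <;> by_cases h3 : p3 = q3 <;>
            simp [h1, h2, h3]
  -- positive semidefiniteness of the extension
  have hpsdG : ∀ y y', (G y y').PosSemidef := by
    intro y y'
    have hc : (0:ℝ) ≤ (2 * (d:ℝ)^2)⁻¹ := by positivity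
    have h1 := smul_psd hc (psd_extend (hpsdΦb y)
      (fun p : Fin d × Fin d × Fin d => (p.1, p.2.1)) (fun p => p.2.2))
    have h2 := smul_psd hc (psd_extend (hpsdΦb y')
      (fun p : Fin d × Fin d × Fin d => (p.1, p.2.2)) (fun p => p.2.1))
    have hdecomp : G y y' = (((2 * (d:ℝ)^2)⁻¹ : ℝ) : ℂ) • (Matrix.of
        fun p q : Fin d × Fin d × Fin d =>
          Φb y (p.1, p.2.1) (q.1, q.2.1) * (if p.2.2 = q.2.2 then (1:ℂ) else 0))
      + (((2 * (d:ℝ)^2)⁻¹ : ℝ) : ℂ) • (Matrix.of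
        fun p q : Fin d × Fin d × Fin d =>
          Φb y' (p.1, p.2.2) (q.1, q.2.2) * (if p.2.1 = q.2.1 then (1:ℂ) else 0)) := by
      rw [hG]
      ext p q
      simp only [Matrix.add_apply, Matrix.smul_apply, Matrix.of_apply, smul_eq_mul]
      push_cast
      ring
    rw [hdecomp]
    exact h1.add h2
  -- swap symmetry
  have hswap : ∀ y y', (Matrix.of fun (p q : Fin d × Fin d × Fin d) =>
      G y y' (p.1, p.2.2, p.2.1) (q.1, q.2.2, q.2.1)) = G y' y := by
    intro y y'
    ext p q
    simp only [hG, Matrix.of_apply]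
    ring
  exact ⟨⟨hpsdG, htot⟩, hmarg, hswap⟩
end

section
/- Let d ≥ 2 be an integer and, with ζ := exp(2πi/d), X the d×d cyclic-shift matrix, Z the d×d clock matrix, Φ := (1/d)Σ_{i,j=0}^{d−1}|ii⟩⟨jj|, and Φ^{(a,b)} := (X^aZ^b⊗I)Φ(X^aZ^b⊗I)† for (a,b)∈(ZMod d)², set P^y := ½Φ^y + (1/(2d²))I for y∈Y := (ZMod d)². Then the POVM (P^y)_{y∈Y} is not realizable by local operations and one-way classical communication: there do not exist a nonempty finite type X', a POVM (E^x)_{x∈X'} on ℂ^d, and for each x∈X' a POVM (F^{x,y})_{y∈Y} on ℂ^d, such that P^y = Σ_{x∈X'} E^x ⊗ F^{x,y} for all y∈Y. -/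
open Matrix Kronecker ComplexOrder

lemma bellaux_normSq_sum_mul_le {n : Type*} [Fintype n] (v w : n → ℂ) :
    Complex.normSq (∑ l, v l * star (w l)) ≤
      (∑ l, Complex.normSq (v l)) * (∑ l, Complex.normSq (w l)) := by
  let v' : EuclideanSpace ℂ n := WithLp.toLp 2 v
  let w' : EuclideanSpace ℂ n := WithLp.toLp 2 w
  have h := norm_inner_le_norm (𝕜 := ℂ) w' v'
  rw [PiLp.inner_apply, EuclideanSpace.norm_eq, EuclideanSpace.norm_eq] at h
  have hw : (0:ℝ) ≤ ∑ i, ‖w' i‖^2 := Finset.sum_nonneg fun i _ => sq_nonneg _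
  have hv : (0:ℝ) ≤ ∑ i, ‖v' i‖^2 := Finset.sum_nonneg fun i _ => sq_nonneg _
  have h2 : ‖∑ i, (inner (𝕜 := ℂ) (w' i) (v' i))‖^2 ≤
      (∑ i, ‖w' i‖^2) * (∑ i, ‖v' i‖^2) := by
    nlinarith [Real.sq_sqrt hw, Real.sq_sqrt hv,
      Real.sqrt_nonneg (∑ i, ‖w' i‖^2), Real.sqrt_nonneg (∑ i, ‖v' i‖^2),
      norm_nonneg (∑ i, (inner (𝕜 := ℂ) (w' i) (v' i)))]
  have hinner : ∀ i, (inner (𝕜 := ℂ) (w' i) (v' i)) = v i * star (w i) := by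
    intro i; simp [RCLike.inner_apply, v', w']
  simp only [hinner] at h2
  calc Complex.normSq (∑ l, v l * star (w l)) = ‖∑ l, v l * star (w l)‖^2 := by
        exact Complex.normSq_eq_norm_sq _
    _ ≤ (∑ i, ‖w' i‖^2) * (∑ i, ‖v' i‖^2) := h2
    _ = (∑ l, Complex.normSq (v l)) * (∑ l, Complex.normSq (w l)) := by
        rw [mul_comm]; congr 1 <;> · apply Finset.sum_congr rfl; intro i _
                                     exact (Complex.normSq_eq_norm_sq _).symm

lemma bellaux_trace_conjTranspose_mul_self_re {n : Type*} [Fintype n] (K : Matrix n n ℂ) :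
    (trace (Kᴴ * K)).re = ∑ j, ∑ i, Complex.normSq (K i j) := by
  have h : trace (Kᴴ * K) = ∑ j, ∑ i, (Complex.normSq (K i j) : ℂ) := by
    simp only [trace, diag_apply, mul_apply, conjTranspose_apply, RCLike.star_def]
    congr 1; ext j; congr 1; ext i
    rw [mul_comm, Complex.mul_conj]
  rw [h]
  simp [Complex.ofReal_sum]

lemma bellaux_psd_eq {n : Type*} [Fintype n] {A : Matrix n n ℂ} (hA : A.PosSemidef) :
    ∃ N : Matrix n n ℂ, A = Nᴴ * N := by
  classical
  open scoped MatrixOrder in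
  obtain ⟨N, hN⟩ := CStarAlgebra.nonneg_iff_eq_star_mul_self.mp hA.nonneg
  exact ⟨N, hN⟩

lemma bellaux_trace_mul_re_le {n : Type*} [Fintype n] {A C : Matrix n n ℂ}
    (hA : A.PosSemidef) (hC : C.PosSemidef) :
    (trace (A * C)).re ≤ (trace A).re * (trace C).re := by
  obtain ⟨N, rfl⟩ := bellaux_psd_eq hA
  obtain ⟨M, rfl⟩ := bellaux_psd_eq hC
  have e1 : trace (Nᴴ*N*(Mᴴ*M)) = trace ((N*Mᴴ)ᴴ*(N*Mᴴ)) :=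
    calc trace (Nᴴ*N*(Mᴴ*M)) = trace ((Nᴴ*(N*Mᴴ))*M) := by
          rw [mul_assoc, ← mul_assoc N, ← mul_assoc]
    _ = trace (M*(Nᴴ*(N*Mᴴ))) := trace_mul_comm _ _
    _ = trace ((M*Nᴴ)*(N*Mᴴ)) := by rw [mul_assoc]
    _ = trace ((N*Mᴴ)ᴴ*(N*Mᴴ)) := by rw [conjTranspose_mul, conjTranspose_conjTranspose]
  rw [e1, bellaux_trace_conjTranspose_mul_self_re, bellaux_trace_conjTranspose_mul_self_re,
    bellaux_trace_conjTranspose_mul_self_re]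
  calc ∑ j, ∑ i, Complex.normSq ((N*Mᴴ) i j)
      ≤ ∑ j, ∑ i, (∑ l, Complex.normSq (N i l)) * (∑ l, Complex.normSq (M j l)) := by
        refine Finset.sum_le_sum fun j _ => Finset.sum_le_sum fun i _ => ?_
        have : (N*Mᴴ) i j = ∑ l, N i l * star (M j l) := by
          simp [mul_apply, conjTranspose_apply]
        rw [this]
        exact bellaux_normSq_sum_mul_le _ _
    _ = (∑ i, ∑ l, Complex.normSq (N i l)) * (∑ j, ∑ l, Complex.normSq (M j l)) := by
        rw [Finset.sum_comm]
        rw [← Finset.sum_mul_sum]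
    _ = (∑ j, ∑ i, Complex.normSq (N i j)) * (∑ j, ∑ i, Complex.normSq (M i j)) := by
        rw [Finset.sum_comm (f := fun i l => Complex.normSq (N i l)),
          Finset.sum_comm (f := fun j l => Complex.normSq (M j l))]

lemma bellaux_kron_conjTranspose {m n : Type*} (A : Matrix m m ℂ) (B : Matrix n n ℂ) :
    (A ⊗ₖ B)ᴴ = Aᴴ ⊗ₖ Bᴴ := by
  ext ⟨i, j⟩ ⟨k, l⟩
  simp [conjTranspose_apply, kroneckerMap_apply, star_mul', mul_comm]

/-- For `d ≥ 2`, the POVM `(½Φ^y + (1/(2d²))I)_{y ∈ (ZMod d)²}` is not realizable by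
local operations and one-way classical communication. -/
theorem bell_POVM_not_one_way_LOCC
    (d : ℕ) [NeZero d] (hd : 2 ≤ d)
    (ζ : ℂ) (hζ : ζ = Complex.exp (2 * Real.pi * Complex.I / d))
    (Xm Zm : Matrix (Fin d) (Fin d) ℂ)
    (hX : Xm = Matrix.of fun (i j : Fin d) => if (i : ℕ) = ((j : ℕ) + 1) % d then 1 else 0)
    (hZ : Zm = Matrix.of fun (i j : Fin d) => if i = j then ζ ^ (i : ℕ) else 0)
    (Φ : Matrix (Fin d × Fin d) (Fin d × Fin d) ℂ)
    (hΦ : Φ = Matrix.of fun (p q : Fin d × Fin d) =>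
        if p.1 = p.2 ∧ q.1 = q.2 then (d : ℂ)⁻¹ else 0)
    (Φb : ZMod d × ZMod d → Matrix (Fin d × Fin d) (Fin d × Fin d) ℂ)
    (hΦb : ∀ ab : ZMod d × ZMod d,
        Φb ab = ((Xm ^ ab.1.val * Zm ^ ab.2.val) ⊗ₖ (1 : Matrix (Fin d) (Fin d) ℂ)) * Φ
          * ((Xm ^ ab.1.val * Zm ^ ab.2.val) ⊗ₖ (1 : Matrix (Fin d) (Fin d) ℂ))ᴴ)
    (P : ZMod d × ZMod d → Matrix (Fin d × Fin d) (Fin d × Fin d) ℂ)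
    (hP : ∀ y, P y = (2 : ℂ)⁻¹ • Φb y + (2 * (d : ℂ) ^ 2)⁻¹ • 1) :
    ¬ ∃ (X' : Type) (inst : Fintype X') (_ : Nonempty X')
        (E : X' → Matrix (Fin d) (Fin d) ℂ)
        (F : X' → ZMod d × ZMod d → Matrix (Fin d) (Fin d) ℂ),
        (∀ x, (E x).PosSemidef) ∧ (∑ x ∈ @Finset.univ X' inst, E x = 1)
        ∧ (∀ x y, (F x y).PosSemidef) ∧ (∀ x, ∑ y : ZMod d × ZMod d, F x y = 1)
        ∧ (∀ y, P y = ∑ x ∈ @Finset.univ X' inst, E x ⊗ₖ F x y) := by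
  rintro ⟨X', inst, -, E, F, hE, hEsum, hF, hFsum, hPsum⟩
  have hd0C : (d:ℂ) ≠ 0 := Nat.cast_ne_zero.mpr (NeZero.ne d)
  -- X is unitary
  have hXu : Xm ∈ unitary (Matrix (Fin d) (Fin d) ℂ) := by
    have hX' : Xm = Matrix.of fun (i j : Fin d) => if i = j + 1 then 1 else 0 := by
      rw [hX]; ext i j; simp only [Matrix.of_apply]
      congr 1
      have : ((j+1 : Fin d) : ℕ) = ((j:ℕ)+1)%d := by
        rw [Fin.add_def]; simp [Nat.mod_eq_of_lt (lt_of_lt_of_le one_lt_two hd)]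
      rw [eq_iff_iff, Fin.ext_iff, this]
    rw [Unitary.mem_iff]
    constructor
    · ext j k
      rw [Matrix.star_eq_conjTranspose, Matrix.mul_apply]
      simp only [conjTranspose_apply, hX', Matrix.of_apply, apply_ite (star : ℂ → ℂ), star_one,
        star_zero, ite_mul, one_mul, zero_mul, Matrix.one_apply]
      rw [Finset.sum_ite_eq' Finset.univ (j+1) (fun i => if i = k + 1 then (1:ℂ) else 0)]
      simp [eq_comm]
    · ext i i'
      rw [Matrix.star_eq_conjTranspose, Matrix.mul_apply]
      have hiff : ∀ a b : Fin d, (a = b + 1) ↔ (b = a - 1) := by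
        intro a b; constructor <;> intro h <;> subst h <;> simp
      simp only [conjTranspose_apply, hX', Matrix.of_apply, apply_ite (star : ℂ → ℂ), star_one,
        star_zero, hiff, mul_ite, mul_one, mul_zero, ite_mul, one_mul, zero_mul, Matrix.one_apply]
      rw [Finset.sum_ite_eq' Finset.univ (i'-1) (fun j => if j = i - 1 then (1:ℂ) else 0)]
      simp only [Finset.mem_univ, if_true]
      by_cases h : i = i'
      · simp [h]
      · have : ¬ (i' - 1 = i - 1) := fun hc => h (by
          have := congrArg (· + 1) hc; simpa using this.symm)
        simp [this, h]
  -- Z is unitary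
  have hZu : Zm ∈ unitary (Matrix (Fin d) (Fin d) ℂ) := by
    have hζζ : star ζ * ζ = 1 := by
      rw [hζ, RCLike.star_def, ← Complex.exp_conj, ← Complex.exp_add]
      have : (starRingEnd ℂ) (2 * Real.pi * Complex.I / d) = -(2 * Real.pi * Complex.I / d) := by
        simp [map_div₀, Complex.conj_I, map_ofNat]; ring
      rw [this, neg_add_cancel, Complex.exp_zero]
    have hζζ' : ζ * star ζ = 1 := by rw [mul_comm]; exact hζζ
    have hZ' : Zm = Matrix.diagonal (fun i : Fin d => ζ ^ (i:ℕ)) := by rw [hZ]; rfl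
    rw [Unitary.mem_iff, Matrix.star_eq_conjTranspose, hZ', diagonal_conjTranspose,
      diagonal_mul_diagonal, diagonal_mul_diagonal]
    have key : ∀ f : Fin d → ℂ, (∀ i, f i = 1) → Matrix.diagonal f = 1 := fun f h => by
      rw [funext h]; exact Matrix.diagonal_one
    have hζζc : (starRingEnd ℂ) ζ * ζ = 1 := hζζ
    have hζζc' : ζ * (starRingEnd ℂ) ζ = 1 := hζζ'
    constructor <;> · apply key; intro i
                      simp [Pi.star_apply, star_pow, ← mul_pow, hζζc, hζζc']
  -- the local unitaries
  set U : ZMod d × ZMod d → Matrix (Fin d) (Fin d) ℂ :=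
    fun y => Xm ^ y.1.val * Zm ^ y.2.val with hU
  have hUu : ∀ y, U y ∈ unitary (Matrix (Fin d) (Fin d) ℂ) :=
    fun y => mul_mem (pow_mem hXu _) (pow_mem hZu _)
  have hUU : ∀ y, (U y)ᴴ * U y = 1 := by
    intro y
    have := (Unitary.mem_iff.mp (hUu y)).1
    rwa [Matrix.star_eq_conjTranspose] at this
  have hUU' : ∀ y, U y * (U y)ᴴ = 1 := by
    intro y
    have := (Unitary.mem_iff.mp (hUu y)).2
    rwa [Matrix.star_eq_conjTranspose] at this
  set V : ZMod d × ZMod d → Matrix (Fin d × Fin d) (Fin d × Fin d) ℂ :=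
    fun y => (U y) ⊗ₖ (1 : Matrix (Fin d) (Fin d) ℂ) with hV
  have hVH : ∀ y, (V y)ᴴ = (U y)ᴴ ⊗ₖ (1 : Matrix (Fin d) (Fin d) ℂ) := by
    intro y; rw [hV]; rw [bellaux_kron_conjTranspose, conjTranspose_one]
  have hVV : ∀ y, (V y)ᴴ * V y = 1 := by
    intro y
    rw [hVH]
    show (U y)ᴴ ⊗ₖ (1 : Matrix (Fin d) (Fin d) ℂ) * ((U y) ⊗ₖ 1) = 1
    rw [← mul_kronecker_mul, hUU, one_mul, one_kronecker_one]
  have hΦb' : ∀ y, Φb y = V y * Φ * (V y)ᴴ := fun y => hΦb y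
  -- Φ facts
  have hΦΦ : Φ * Φ = Φ := by
    ext p q
    rw [Matrix.mul_apply, hΦ]
    simp only [Matrix.of_apply, Fintype.sum_prod_type, ite_mul, zero_mul, mul_ite, mul_zero]
    by_cases hp : p.1 = p.2 <;> by_cases hq : q.1 = q.2 <;>
      simp [hp, hq, Finset.sum_ite_eq, Finset.card_univ, mul_inv_cancel₀ hd0C,
        inv_mul_cancel₀ hd0C]
    field_simp
  have htrΦ : Φ.trace = 1 := by
    rw [Matrix.trace, hΦ]
    simp only [diag_apply, Matrix.of_apply, Fintype.sum_prod_type, and_self]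
    simp [Finset.sum_ite_eq, Finset.card_univ, mul_inv_cancel₀ hd0C]
  have htr3 : ∀ A B : Matrix (Fin d) (Fin d) ℂ,
      (Φ * (A ⊗ₖ B)).trace = (d : ℂ)⁻¹ * (A * Bᵀ).trace := by
    intro A B
    rw [Matrix.trace, Matrix.trace]
    simp only [diag_apply, Matrix.mul_apply, hΦ, Matrix.of_apply, kroneckerMap_apply,
      transpose_apply, Fintype.sum_prod_type, ite_mul, zero_mul]
    rw [Finset.mul_sum]
    simp only [ite_and]
    simp [Finset.sum_ite_eq, Finset.sum_ite_eq', Finset.mul_sum, mul_comm, mul_assoc,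
      mul_left_comm]
    exact Finset.sum_comm
  have htrΦb : ∀ y, (Φb y).trace = 1 := by
    intro y
    rw [hΦb' y, trace_mul_cycle, hVV, one_mul, htrΦ]
  have htrΦb2 : ∀ y, (Φb y * Φb y).trace = 1 := by
    intro y
    have h1 : Φb y * Φb y = V y * (Φ * Φ) * (V y)ᴴ := by
      rw [hΦb' y]
      calc (V y * Φ * (V y)ᴴ) * (V y * Φ * (V y)ᴴ)
          = V y * (Φ * (((V y)ᴴ * V y) * (Φ * (V y)ᴴ))) := by simp only [mul_assoc]
        _ = V y * (Φ * (Φ * (V y)ᴴ)) := by rw [hVV, one_mul]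
        _ = V y * (Φ * Φ) * (V y)ᴴ := by simp only [mul_assoc]
    rw [h1, hΦΦ, ← hΦb' y, htrΦb y]
  -- per-term computation
  have hterm : ∀ (y : ZMod d × ZMod d) (x : X'),
      (Φb y * (E x ⊗ₖ F x y)).trace
        = (d:ℂ)⁻¹ * (((U y)ᴴ * E x * U y) * (F x y)ᵀ).trace := by
    intro y x
    rw [hΦb' y]
    have hmid : (V y)ᴴ * (E x ⊗ₖ F x y) * V y = ((U y)ᴴ * E x * U y) ⊗ₖ (F x y) := by
      rw [hVH]
      show (U y)ᴴ ⊗ₖ (1 : Matrix (Fin d) (Fin d) ℂ) * (E x ⊗ₖ F x y) * ((U y) ⊗ₖ 1) = _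
      rw [← mul_kronecker_mul, ← mul_kronecker_mul, one_mul, mul_one]
    calc (V y * Φ * (V y)ᴴ * (E x ⊗ₖ F x y)).trace
        = ((V y * Φ) * ((V y)ᴴ * (E x ⊗ₖ F x y))).trace := by rw [mul_assoc (V y * Φ)]
      _ = (((V y)ᴴ * (E x ⊗ₖ F x y)) * (V y * Φ)).trace := trace_mul_comm _ _
      _ = ((((V y)ᴴ * (E x ⊗ₖ F x y)) * V y) * Φ).trace := by rw [← mul_assoc]
      _ = (Φ * (((V y)ᴴ * (E x ⊗ₖ F x y)) * V y)).trace := trace_mul_comm _ _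
      _ = (Φ * (((U y)ᴴ * E x * U y) ⊗ₖ (F x y))).trace := by rw [hmid]
      _ = (d:ℂ)⁻¹ * (((U y)ᴴ * E x * U y) * (F x y)ᵀ).trace := htr3 _ _
  -- the bound per term
  have htermle : ∀ (y : ZMod d × ZMod d) (x : X'),
      ((Φb y * (E x ⊗ₖ F x y)).trace).re
        ≤ (d:ℝ)⁻¹ * (((E x).trace).re * (((F x y).trace).re)) := by
    intro y x
    rw [hterm y x]
    have hcast : (d:ℂ)⁻¹ = (((d:ℝ)⁻¹ : ℝ) : ℂ) := by push_cast; ring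
    rw [hcast, Complex.re_ofReal_mul]
    refine mul_le_mul_of_nonneg_left ?_ (inv_nonneg.mpr (Nat.cast_nonneg d))
    have hA' : ((U y)ᴴ * E x * U y).PosSemidef := (hE x).conjTranspose_mul_mul_same _
    have hC' : ((F x y)ᵀ).PosSemidef := (hF x y).transpose
    have hle := bellaux_trace_mul_re_le hA' hC'
    have htrA : ((U y)ᴴ * E x * U y).trace = (E x).trace := by
      rw [trace_mul_cycle, hUU', one_mul]
    rwa [htrA, trace_transpose] at hle
  -- trace of Φb y * P y
  have hkey : ∀ y, (Φb y * P y).trace = 2⁻¹ + (2*(d:ℂ)^2)⁻¹ := by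
    intro y
    rw [hP y, mul_add, trace_add, mul_smul_comm, mul_smul_comm, trace_smul, trace_smul,
      mul_one, htrΦb2 y, htrΦb y, smul_eq_mul, smul_eq_mul, mul_one, mul_one]
  -- total sums
  have hS1 : ∑ y : ZMod d × ZMod d, ((Φb y * P y).trace).re
      = (d:ℝ)^2 * (2⁻¹ + (2*(d:ℝ)^2)⁻¹) := by
    have h2 : ((2:ℂ)⁻¹ + (2*(d:ℂ)^2)⁻¹) = (((2⁻¹ + (2*(d:ℝ)^2)⁻¹ : ℝ)) : ℂ) := by
      push_cast; ring
    have hcard : Fintype.card (ZMod d × ZMod d) = d * d := by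
      simp [ZMod.card]
    simp only [hkey, h2, Complex.ofReal_re, Finset.sum_const, Finset.card_univ, hcard,
      nsmul_eq_mul]
    push_cast
    ring
  have hS2 : ∀ y, ((Φb y * P y).trace).re = ∑ x, ((Φb y * (E x ⊗ₖ F x y)).trace).re := by
    intro y
    rw [hPsum y, Matrix.mul_sum, trace_sum, Complex.re_sum]
  have hFtr : ∀ x, ∑ y : ZMod d × ZMod d, (((F x y).trace).re) = (d:ℝ) := by
    intro x
    rw [← Complex.re_sum, ← trace_sum, hFsum x, trace_one]
    simp
  have hEtr : ∑ x, (((E x).trace).re) = (d:ℝ) := by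
    rw [← Complex.re_sum, ← trace_sum, hEsum, trace_one]
    simp
  have hS3 : ∑ y : ZMod d × ZMod d, ∑ x, ((Φb y * (E x ⊗ₖ F x y)).trace).re ≤ (d:ℝ) := by
    calc ∑ y : ZMod d × ZMod d, ∑ x, ((Φb y * (E x ⊗ₖ F x y)).trace).re
        ≤ ∑ y : ZMod d × ZMod d, ∑ x, (d:ℝ)⁻¹ * (((E x).trace).re * (((F x y).trace).re)) :=
          Finset.sum_le_sum fun y _ => Finset.sum_le_sum fun x _ => htermle y x
      _ = ∑ x, ∑ y : ZMod d × ZMod d, (d:ℝ)⁻¹ * (((E x).trace).re * (((F x y).trace).re)) :=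
          Finset.sum_comm
      _ = ∑ x, (d:ℝ)⁻¹ * (((E x).trace).re * (d:ℝ)) := by
          refine Finset.sum_congr rfl fun x _ => ?_
          rw [← Finset.mul_sum, ← Finset.mul_sum, hFtr x]
      _ = (d:ℝ) := by
          have : ∀ x : X', (d:ℝ)⁻¹ * (((E x).trace).re * (d:ℝ))
              = ((d:ℝ)⁻¹ * (d:ℝ)) * ((E x).trace).re := by intro x; ring
          simp only [this, inv_mul_cancel₀ (Nat.cast_ne_zero.mpr (NeZero.ne d) : (d:ℝ) ≠ 0),
            one_mul]
          exact hEtr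
  have hfinal : (d:ℝ)^2 * (2⁻¹ + (2*(d:ℝ)^2)⁻¹) ≤ (d:ℝ) := by
    rw [← hS1, Finset.sum_congr rfl fun y _ => hS2 y]
    exact hS3
  have hd2 : (2:ℝ) ≤ (d:ℝ) := by exact_mod_cast hd
  have hd0R : (0:ℝ) < (d:ℝ) := by linarith
  have hexp : (d:ℝ)^2 * (2⁻¹ + (2*(d:ℝ)^2)⁻¹) = (d:ℝ)^2/2 + 1/2 := by
    field_simp
  rw [hexp] at hfinal
  nlinarith [sq_nonneg ((d:ℝ) - 1)]
end

section
/- Let d ≥ 2 be an integer and, with ζ := exp(2πi/d), X the d×d cyclic-shift matrix, Z the d×d clock matrix, Φ := (1/d)Σ_{i,j=0}^{d−1}|ii⟩⟨jj|, and Φ^{(a,b)} := (X^aZ^b⊗I)Φ(X^aZ^b⊗I)† for (a,b)∈(ZMod d)², set P^y := ½Φ^y + (1/(2d²))I for y∈Y := (ZMod d)². Then the POVM (P^y)_{y∈Y} is not two-PPT-extendible: there exists no family (G^{y,y'})_{(y,y')∈Y×Y} of positive semidefinite matrices on ℂ^d⊗ℂ^d⊗ℂ^d (factors labeled A, B₁,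 B₂, with P^y acting on A⊗B₁) such that Σ_{y'∈Y} G^{y,y'} = P^y ⊗ I_{B₂} for every y∈Y and the partial transpose of G^{y,y'} on the B₁ factor is positive semidefinite for all y,y'∈Y. -/
open Matrix Kronecker ComplexOrder

/-- For `d ≥ 2`, the POVM `(½Φ^y + (1/(2d²))I)_{y ∈ (ZMod d)²}` is not
two-PPT-extendible. -/
theorem bell_POVM_not_two_PPT_extendible
    (d : ℕ) [NeZero d] (hd : 2 ≤ d)
    (ζ : ℂ) (hζ : ζ = Complex.exp (2 * Real.pi * Complex.I / d))
    (Xm Zm : Matrix (Fin d) (Fin d) ℂ)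
    (hX : Xm = Matrix.of fun (i j : Fin d) => if (i : ℕ) = ((j : ℕ) + 1) % d then 1 else 0)
    (hZ : Zm = Matrix.of fun (i j : Fin d) => if i = j then ζ ^ (i : ℕ) else 0)
    (Φ : Matrix (Fin d × Fin d) (Fin d × Fin d) ℂ)
    (hΦ : Φ = Matrix.of fun (p q : Fin d × Fin d) =>
        if p.1 = p.2 ∧ q.1 = q.2 then (d : ℂ)⁻¹ else 0)
    (Φb : ZMod d × ZMod d → Matrix (Fin d × Fin d) (Fin d × Fin d) ℂ)
    (hΦb : ∀ ab : ZMod d × ZMod d,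
        Φb ab = ((Xm ^ ab.1.val * Zm ^ ab.2.val) ⊗ₖ (1 : Matrix (Fin d) (Fin d) ℂ)) * Φ
          * ((Xm ^ ab.1.val * Zm ^ ab.2.val) ⊗ₖ (1 : Matrix (Fin d) (Fin d) ℂ))ᴴ)
    (P : ZMod d × ZMod d → Matrix (Fin d × Fin d) (Fin d × Fin d) ℂ)
    (hP : ∀ y, P y = (2 : ℂ)⁻¹ • Φb y + (2 * (d : ℂ) ^ 2)⁻¹ • 1) :
    ¬ ∃ G : ZMod d × ZMod d → ZMod d × ZMod d →
          Matrix (Fin d × Fin d × Fin d) (Fin d × Fin d × Fin d) ℂ,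
        (∀ y y', (G y y').PosSemidef)
        ∧ (∀ y, ∑ y' : ZMod d × ZMod d, G y y' =
            Matrix.of fun (p q : Fin d × Fin d × Fin d) =>
              P y (p.1, p.2.1) (q.1, q.2.1) * (if p.2.2 = q.2.2 then (1 : ℂ) else 0))
        ∧ (∀ y y', Matrix.PosSemidef (Matrix.of fun (p q : Fin d × Fin d × Fin d) =>
            G y y' (p.1, q.2.1, p.2.2) (q.1, p.2.1, q.2.2))) := by
  rintro ⟨G, -, hsum, hppt⟩
  -- Φb 0 = Φ
  have hΦb0 : Φb 0 = Φ := by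
    rw [hΦb 0]
    simp [ZMod.val_zero, Matrix.one_kronecker_one]
  have hP0 : P (0, 0) = (2 : ℂ)⁻¹ • Φ + (2 * (d : ℂ) ^ 2)⁻¹ • 1 := by
    rw [hP]; rw [show ((0 : ZMod d), (0 : ZMod d)) = 0 from rfl, hΦb0]
  -- the partial-transposed marginal
  set M : Matrix (Fin d × Fin d × Fin d) (Fin d × Fin d × Fin d) ℂ :=
    ∑ y' : ZMod d × ZMod d, Matrix.of fun p q =>
      G (0, 0) y' (p.1, q.2.1, p.2.2) (q.1, p.2.1, q.2.2) with hMdef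
  have hMpsd : M.PosSemidef := by
    rw [hMdef]
    exact Finset.sum_induction _ _ (fun a b ha hb => ha.add hb) Matrix.PosSemidef.zero
      (fun y' _ => hppt (0, 0) y')
  have hMeq : ∀ p q, M p q
      = P (0, 0) (p.1, q.2.1) (q.1, p.2.1) * (if p.2.2 = q.2.2 then (1 : ℂ) else 0) := by
    intro p q
    rw [hMdef, Matrix.sum_apply]
    simp only [Matrix.of_apply]
    rw [← Matrix.sum_apply, hsum (0, 0)]
    rfl
  -- indices
  have h1lt : (1 : ℕ) < d := lt_of_lt_of_le one_lt_two hd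
  have h01 : (0 : Fin d) ≠ (1 : Fin d) := by
    apply Fin.ne_of_val_ne
    rw [Fin.val_zero, Fin.val_one', Nat.mod_eq_of_lt h1lt]
    omega
  set a : Fin d × Fin d × Fin d := (0, 1, 0) with ha
  set b : Fin d × Fin d × Fin d := (1, 0, 0) with hb
  have hab : a ≠ b := by
    intro h; exact h01 (congrArg Prod.fst h)
  set v : Fin d × Fin d × Fin d → ℂ :=
    Pi.single a 1 - Pi.single b 1 with hv
  have hsv : star v = v := by
    funext p
    rcases eq_or_ne p a with rfl | hpa
    · simp [hv, Pi.single_apply, hab.symm]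
    rcases eq_or_ne p b with rfl | hpb
    · simp [hv, Pi.single_apply, hab, hpa]
    · simp [hv, Pi.single_apply, hpa, hpb]
  have hnn : (0 : ℂ) ≤ star v ⬝ᵥ M *ᵥ v := hMpsd.dotProduct_mulVec_nonneg v
  -- compute the quadratic form
  have hq : star v ⬝ᵥ M *ᵥ v = M a a - M a b - M b a + M b b := by
    rw [hsv, hv]
    rw [mulVec_sub, Matrix.mulVec_single_one, Matrix.mulVec_single_one]
    rw [sub_dotProduct]
    simp only [single_dotProduct, Pi.sub_apply, mul_one, one_mul, Matrix.col_apply]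
    ring
  -- entry values
  have hΦaa : Φ (a.1, a.2.1) (a.1, a.2.1) = 0 := by
    rw [hΦ]; simp [ha, h01]
  have hMaa : M a a = (2 * (d : ℂ) ^ 2)⁻¹ := by
    rw [hMeq, hP0]; simp [ha, h01, Matrix.one_apply, hΦ]
  have hMbb : M b b = (2 * (d : ℂ) ^ 2)⁻¹ := by
    rw [hMeq, hP0]; simp [hb, h01, Matrix.one_apply, hΦ, Ne.symm h01]
  have hMab : M a b = (2 : ℂ)⁻¹ * (d : ℂ)⁻¹ := by
    rw [hMeq, hP0]
    simp [ha, hb, Matrix.one_apply, hΦ, h01, Prod.ext_iff]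
  have hMba : M b a = (2 : ℂ)⁻¹ * (d : ℂ)⁻¹ := by
    rw [hMeq, hP0]
    simp [ha, hb, Matrix.one_apply, hΦ, Ne.symm h01, Prod.ext_iff]
  have hdpos : (0 : ℝ) < (d : ℝ) := by positivity
  have hval : star v ⬝ᵥ M *ᵥ v = (((d : ℝ) ^ 2)⁻¹ - (d : ℝ)⁻¹ : ℝ) := by
    rw [hq, hMaa, hMab, hMba, hMbb]
    push_cast
    rw [mul_inv]
    ring
  rw [hval, Complex.zero_le_real] at hnn
  have h2 : (2 : ℝ) ≤ (d : ℝ) := by exact_mod_cast hd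
  have hlt : ((d : ℝ) ^ 2)⁻¹ < (d : ℝ)⁻¹ := by
    apply inv_strictAnti₀ hdpos
    nlinarith
  linarith
end

section
/- Let A, B be nonempty finite types, ε∈[0,1], and k ≥ 1 an integer. Let Γ be a positive semidefinite matrix on A⊗B with Tr_B[Γ] = I_A (the Choi operator of a channel N from A to B). Let M be a nonempty finite set, for each m∈M let ρ^m be a quantum state on A, and let (Λ^m)_{m∈M} be a POVM on B such that Tr[((ρ^m)ᵀ ⊗ Λ^m)·Γ] ≥ 1−ε for every m∈M (i.e., the code has maximum error probability at most ε). Then there exist a quantum state ρ on A, a real number λ with 0 ≤ λ ≤ 1/|M|, and a family (Q^v)_{v∈{0,1}^k} of matrices on A⊗B^{⊗k} (B-factors labeled B₁,…,B_k) such that: (22) Σ_{v∈{0,1}^k} Q^v = ρ ⊗ I_{B^{⊗k}}; (23) each Q^v is positive semidefinite; (24) for every permutation π of {1,…,k} and every v, conjugating Q^{(v_{π(1)},…,v_{π(k)})} by the permutation unitary W^π on the B-factors yields Q^{(v_1,…,v_k)}; (25) for every v and every i∈{1,…,k}, the partial transpose of Q^v on the first i B-factors is positive semidefinite; (26) Σ_{v: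 v_1=0} Tr_A[Q^v] ≤ λ·I_{B^{⊗k}} in the Loewner order; (27) for every (v_1,…,v_{k−1})∈{0,1}^{k−1}, Σ_{v_k∈{0,1}} Tr_A[Q^{(v_1,…,v_k)}] = (1/|B|) Σ_{v_k∈{0,1}} Tr_{A,B_k}[Q^{(v_1,…,v_k)}] ⊗ I_{B_k}; (28) (1/|B|^{k−1}) Σ_{v: v_1=0} Tr[Q^v · (Γ ⊗ I_{B^{⊗(k−1)}})] ≥ 1−ε, where Γ acts on A and B₁. This expresses that the one-shot classical capacity satisfies C^ε(N) ≤ −log₂ of the optimal SDP value, i.e., the SDP value is at most 1/|M| for any achievable code size |M|. -/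
open Matrix Kronecker ComplexOrder

lemma prod_delta' {ι κ : Type*} [Fintype ι] [DecidableEq κ] (f g : ι → κ) :
    (∏ j, if f j = g j then (1 : ℂ) else 0) = if f = g then 1 else 0 := by
  by_cases h : f = g
  · simp [h]
  · rw [if_neg h]
    obtain ⟨j, hj⟩ := Function.ne_iff.mp h
    exact Finset.prod_eq_zero (Finset.mem_univ j) (if_neg hj)

lemma sum_pi_prod {ι κ : Type*} [Fintype ι] [DecidableEq ι] [Fintype κ]
    (g : ι → κ → ℂ) : ∑ v : ι → κ, ∏ j, g j (v j) = ∏ j, ∑ t, g j t :=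
  (Fintype.prod_sum _).symm

lemma sum_pi_prod_filter {ι : Type*} [Fintype ι] [DecidableEq ι] (i0 : ι)
    (g : ι → Fin 2 → ℂ) :
    ∑ v ∈ Finset.univ.filter (fun v : ι → Fin 2 => v i0 = 0), ∏ j, g j (v j)
      = g i0 0 * ∏ j ∈ Finset.univ.erase i0, (∑ t, g j t) := by
  rw [Finset.sum_filter]
  have key : ∀ v : ι → Fin 2, (if v i0 = 0 then ∏ j, g j (v j) else 0)
      = ∏ j, (fun j t => if j = i0 then (if t = 0 then g j t else 0) else g j t) j (v j) := by
    intro v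
    by_cases h : v i0 = 0
    · rw [if_pos h]
      refine Finset.prod_congr rfl fun j _ => ?_
      by_cases hj : j = i0
      · subst hj; simp [h]
      · simp [hj]
    · rw [if_neg h]
      exact (Finset.prod_eq_zero (Finset.mem_univ i0) (by simp [h])).symm
  simp_rw [key]
  rw [sum_pi_prod (fun j t => if j = i0 then (if t = 0 then g j t else 0) else g j t)]
  rw [← Finset.mul_prod_erase Finset.univ _ (Finset.mem_univ i0)]
  congr 1
  · simp [Fin.sum_univ_two]
  · refine Finset.prod_congr rfl fun j hj => ?_
    rw [Finset.mem_erase] at hj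
    simp [hj.1]

lemma sum_pi_pi_prod {ι B : Type*} [Fintype ι] [DecidableEq ι] [Fintype B]
    (L : ι → B → B → ℂ) :
    ∑ f : ι → B, ∑ g : ι → B, ∏ j, L j (f j) (g j) = ∏ j, ∑ b, ∑ b', L j b b' := by
  have h1 : ∏ j, ∑ z : B × B, L j z.1 z.2 = ∑ h : ι → B × B, ∏ j, L j (h j).1 (h j).2 :=
    Fintype.prod_sum _
  have h2 : ∑ h : ι → B × B, ∏ j, L j (h j).1 (h j).2
      = ∑ fg : (ι → B) × (ι → B), ∏ j, L j (fg.1 j) (fg.2 j) := by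
    rw [← Equiv.sum_comp (Equiv.arrowProdEquivProdArrow ι (fun _ => B) (fun _ => B))
      (fun fg : (ι → B) × (ι → B) => ∏ j, L j (fg.1 j) (fg.2 j))]
    rfl
  rw [Fintype.sum_prod_type] at h2
  simp_rw [← h2, ← h1, Fintype.sum_prod_type]

lemma psd_smul_real {n : Type*} [Fintype n] {M : Matrix n n ℂ} (hM : M.PosSemidef)
    {r : ℝ} (hr : 0 ≤ r) : ((r : ℂ) • M).PosSemidef := by
  constructor
  · ext i j
    simp only [Matrix.conjTranspose_apply, Matrix.smul_apply, smul_eq_mul, star_mul',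
      Complex.star_def, Complex.conj_ofReal]
    congr 1
    exact congrFun (congrFun hM.1 i) j
  · intro x
    simpa [Finsupp.mul_sum, mul_assoc, mul_left_comm] using
      smul_nonneg (Complex.zero_le_real.mpr hr) (hM.2 x)

lemma psd_sum {n ι : Type*} [Fintype n] {s : Finset ι} {F : ι → Matrix n n ℂ}
    (h : ∀ i ∈ s, (F i).PosSemidef) : (∑ i ∈ s, F i).PosSemidef := by
  classical
  induction s using Finset.induction with
  | empty => simpa using Matrix.PosSemidef.zero
  | insert _ _ hni ih =>
    rw [Finset.sum_insert hni]
    exact (h _ (Finset.mem_insert_self _ _)).add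
      (ih fun i hi => h i (Finset.mem_insert_of_mem hi))

lemma psd_eq_ct_mul {n : Type*} [Fintype n] {A : Matrix n n ℂ} (hA : A.PosSemidef) :
    ∃ B : Matrix n n ℂ, A = Bᴴ * B := by
  classical
  open scoped MatrixOrder in
  obtain ⟨B, hB⟩ := CStarAlgebra.nonneg_iff_eq_star_mul_self.mp hA.nonneg
  exact ⟨B, hB⟩

lemma psd_tensor_pi {A B ι : Type*} [Fintype A] [Fintype B] [Fintype ι] [DecidableEq ι]
    (R : Matrix A A ℂ) (hR : R.PosSemidef) (S : ι → Matrix B B ℂ)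
    (hS : ∀ j, (S j).PosSemidef) :
    (Matrix.of fun p q : A × (ι → B) => R p.1 q.1 * ∏ j, S j (p.2 j) (q.2 j)).PosSemidef := by
  obtain ⟨C, hC⟩ := psd_eq_ct_mul hR
  choose D hD using fun j => psd_eq_ct_mul (hS j)
  set CC : Matrix (A × (ι → B)) (A × (ι → B)) ℂ :=
    Matrix.of fun z p => C z.1 p.1 * ∏ j, D j (z.2 j) (p.2 j) with hCC
  have key : (Matrix.of fun p q : A × (ι → B) => R p.1 q.1 * ∏ j, S j (p.2 j) (q.2 j))
      = CCᴴ * CC := by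
    ext p q
    have hR' : R p.1 q.1 = ∑ a, star (C a p.1) * C a q.1 := by
      rw [hC, Matrix.mul_apply]
      simp [Matrix.conjTranspose_apply]
    have hSj : ∀ j, S j (p.2 j) (q.2 j) = ∑ b, star (D j b (p.2 j)) * D j b (q.2 j) := by
      intro j
      rw [hD j, Matrix.mul_apply]
      simp [Matrix.conjTranspose_apply]
    calc (Matrix.of fun p q : A × (ι → B) => R p.1 q.1 * ∏ j, S j (p.2 j) (q.2 j)) p q
        = (∑ a, star (C a p.1) * C a q.1)
            * ∏ j, ∑ b, star (D j b (p.2 j)) * D j b (q.2 j) := by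
          rw [Matrix.of_apply, hR']
          congr 1
          exact Finset.prod_congr rfl fun j _ => hSj j
      _ = (∑ a, star (C a p.1) * C a q.1)
            * ∑ g : ι → B, ∏ j, star (D j (g j) (p.2 j)) * D j (g j) (q.2 j) := by
          rw [Fintype.prod_sum]
      _ = ∑ a, ∑ g : ι → B, (star (C a p.1) * C a q.1)
            * ∏ j, star (D j (g j) (p.2 j)) * D j (g j) (q.2 j) := by
          rw [Finset.sum_mul_sum]
      _ = (CCᴴ * CC) p q := by
          rw [Matrix.mul_apply, Fintype.sum_prod_type]
          refine Finset.sum_congr rfl fun a _ => Finset.sum_congr rfl fun g _ => ?_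
          simp only [Matrix.conjTranspose_apply, hCC, Matrix.of_apply, star_mul']
          rw [mul_mul_mul_comm, star_prod, ← Finset.prod_mul_distrib]
  rw [key]
  exact Matrix.posSemidef_conjTranspose_mul_self CC

lemma sum_reorg {M A V : Type*} [Fintype M] [Fintype A] (s : Finset V) (c : ℂ)
    (G : M → A → ℂ) (F : M → V → ℂ) :
    ∑ v ∈ s, ∑ a, c * ∑ m, G m a * F m v = c * ∑ m, (∑ a, G m a) * ∑ v ∈ s, F m v := by
  calc ∑ v ∈ s, ∑ a, c * ∑ m, G m a * F m v
      = ∑ v ∈ s, ∑ a, ∑ m, c * (G m a * F m v) := by simp_rw [Finset.mul_sum]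
    _ = ∑ v ∈ s, ∑ m, ∑ a, c * (G m a * F m v) :=
        Finset.sum_congr rfl fun v _ => Finset.sum_comm
    _ = ∑ m, ∑ v ∈ s, ∑ a, c * (G m a * F m v) := Finset.sum_comm
    _ = c * ∑ m, (∑ a, G m a) * ∑ v ∈ s, F m v := by
        rw [Finset.mul_sum]
        refine Finset.sum_congr rfl fun m _ => ?_
        rw [Finset.sum_comm]
        simp_rw [Finset.sum_mul, Finset.mul_sum]

lemma sum_swap_mul {M β : Type*} [Fintype M] [Fintype β] (x : M → ℂ) (y : M → β → ℂ) :
    ∑ b : β, ∑ m, x m * y m b = ∑ m, x m * ∑ b, y m b := by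
  rw [Finset.sum_comm]
  exact Finset.sum_congr rfl fun m _ => (Finset.mul_sum _ _ _).symm


/-- SDP upper bound on the one-shot classical capacity (Theorem 1 of the paper): for any
`(|M|, ε)`-code for the channel with Choi operator `Γ`, there is a feasible point of the
`k`-PPT-extendible SDP whose objective value `λ` is at most `1/|M|`. -/
theorem one_shot_classical_capacity_SDP_bound
    (A B : Type) [Fintype A] [DecidableEq A] [Nonempty A]
    [Fintype B] [DecidableEq B] [Nonempty B]
    (ε : ℝ) (hε0 : 0 ≤ ε) (hε1 : ε ≤ 1)
    (k : ℕ) (hk : 1 ≤ k)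
    -- the Choi operator of the channel N : A → B
    (Γ : Matrix (A × B) (A × B) ℂ) (hΓpos : Γ.PosSemidef)
    (hΓtr : ∀ a a', ∑ b, Γ (a, b) (a', b) = if a = a' then (1 : ℂ) else 0)
    -- an ε-error code: message set M, encoded states ρ^m, decoding POVM Λ^m
    (M : Type) [Fintype M] [Nonempty M]
    (ρ : M → Matrix A A ℂ)
    (hρpos : ∀ m, (ρ m).PosSemidef) (hρtr : ∀ m, (ρ m).trace = 1)
    (Λ : M → Matrix B B ℂ)
    (hΛpos : ∀ m, (Λ m).PosSemidef) (hΛsum : ∑ m, Λ m = 1)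
    (herr : ∀ m, (1 - ε : ℂ) ≤ (((ρ m)ᵀ ⊗ₖ Λ m) * Γ).trace) :
    ∃ (ρ0 : Matrix A A ℂ) (lam : ℝ)
      (Q : (Fin k → Fin 2) → Matrix (A × (Fin k → B)) (A × (Fin k → B)) ℂ),
      ρ0.PosSemidef ∧ ρ0.trace = 1
      ∧ 0 ≤ lam ∧ lam ≤ 1 / (Fintype.card M : ℝ)
      -- (22): Σ_v Q^v = ρ0 ⊗ I
      ∧ (∑ v : Fin k → Fin 2, Q v =
          Matrix.of fun (p q : A × (Fin k → B)) =>
            ρ0 p.1 q.1 * (if p.2 = q.2 then (1 : ℂ) else 0))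
      -- (23): each Q^v is positive semidefinite
      ∧ (∀ v, (Q v).PosSemidef)
      -- (24): permutation covariance
      ∧ (∀ v : Fin k → Fin 2, ∀ π : Equiv.Perm (Fin k),
          (Matrix.of fun (p q : A × (Fin k → B)) =>
            Q (v ∘ π) (p.1, p.2 ∘ π) (q.1, q.2 ∘ π)) = Q v)
      -- (25): PPT on the first i B-factors
      ∧ (∀ v : Fin k → Fin 2, ∀ i : ℕ, 1 ≤ i → i ≤ k →
          Matrix.PosSemidef (Matrix.of fun (p q : A × (Fin k → B)) =>
            Q v (p.1, fun j => if (j : ℕ) < i then q.2 j else p.2 j)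
                (q.1, fun j => if (j : ℕ) < i then p.2 j else q.2 j)))
      -- (26): Σ_{v : v₁ = 0} Tr_A[Q^v] ≤ λ I in the Loewner order
      ∧ Matrix.PosSemidef
          ((lam : ℂ) • (1 : Matrix (Fin k → B) (Fin k → B) ℂ)
            - Matrix.of fun (f f' : Fin k → B) =>
                ∑ v ∈ Finset.univ.filter (fun v : Fin k → Fin 2 => v ⟨0, by omega⟩ = 0),
                  ∑ a, Q v (a, f) (a, f'))
      -- (27): non-signaling condition on the last B-factor
      ∧ (∀ u : Fin k → Fin 2, ∀ f f' : Fin k → B,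
          (∑ vk : Fin 2, ∑ a : A, Q (Function.update u ⟨k - 1, by omega⟩ vk) (a, f) (a, f'))
            = (Fintype.card B : ℂ)⁻¹
              * (∑ vk : Fin 2, ∑ a : A, ∑ b : B,
                  Q (Function.update u ⟨k - 1, by omega⟩ vk)
                    (a, Function.update f ⟨k - 1, by omega⟩ b)
                    (a, Function.update f' ⟨k - 1, by omega⟩ b))
              * (if f ⟨k - 1, by omega⟩ = f' ⟨k - 1, by omega⟩ then 1 else 0))
      -- (28): success probability constraint
      ∧ (1 - ε : ℂ) ≤ ((Fintype.card B : ℂ) ^ (k - 1))⁻¹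
          * ∑ v ∈ Finset.univ.filter (fun v : Fin k → Fin 2 => v ⟨0, by omega⟩ = 0),
              (Q v * Matrix.of (fun (p q : A × (Fin k → B)) =>
                Γ (p.1, p.2 ⟨0, by omega⟩) (q.1, q.2 ⟨0, by omega⟩)
                  * ∏ j ∈ Finset.univ.erase (⟨0, by omega⟩ : Fin k),
                      (if p.2 j = q.2 j then (1 : ℂ) else 0))).trace := by
  classical
  have hk0 : 0 < k := hk
  set i0 : Fin k := ⟨0, by omega⟩ with hi0def
  set iL : Fin k := ⟨k - 1, by omega⟩ with hiLdef
  set c : ℝ := (Fintype.card M : ℝ)⁻¹ with hcdef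
  have hcardM : (0 : ℝ) < Fintype.card M := by positivity
  have hc0 : 0 ≤ c := by positivity
  set E : M → Fin 2 → Matrix B B ℂ := fun m t => if t = 0 then Λ m else 1 - Λ m with hEdef
  have hE0 : ∀ m, E m 0 = Λ m := fun m => rfl
  have hE1 : ∀ m, E m 1 = 1 - Λ m := fun m => rfl
  have hEpos : ∀ m t, (E m t).PosSemidef := by
    intro m t
    fin_cases t
    · exact hΛpos m
    · show (1 - Λ m).PosSemidef
      have h1 : 1 - Λ m = ∑ m' ∈ Finset.univ.erase m, Λ m' := by
        rw [← hΛsum, ← Finset.add_sum_erase _ _ (Finset.mem_univ m)]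
        abel
      rw [h1]
      exact psd_sum fun m' _ => hΛpos m'
  have hEsum : ∀ m, ∑ t : Fin 2, E m t = 1 := by
    intro m
    rw [Fin.sum_univ_two, hE0, hE1]
    exact add_sub_cancel _ _
  have hEsum_entry : ∀ m (b b' : B), ∑ t : Fin 2, E m t b b' = if b = b' then 1 else 0 := by
    intro m b b'
    have h := congrFun (congrFun (hEsum m) b) b'
    simp only [Matrix.sum_apply] at h
    rw [h, Matrix.one_apply]
  have hEtr : ∀ m, ∑ t : Fin 2, (E m t).trace = (Fintype.card B : ℂ) := by
    intro m
    rw [← Matrix.trace_sum, hEsum, Matrix.trace_one]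
  have htrρ : ∀ m, ∑ a, (ρ m)ᵀ a a = 1 := by
    intro m
    have := hρtr m
    simpa [Matrix.trace, Matrix.diag, Matrix.transpose_apply] using this
  set T : M → (Fin k → Fin 2) → Matrix (A × (Fin k → B)) (A × (Fin k → B)) ℂ :=
    fun m v => Matrix.of fun p q => (ρ m)ᵀ p.1 q.1 * ∏ j, E m (v j) (p.2 j) (q.2 j) with hTdef
  set Q : (Fin k → Fin 2) → Matrix (A × (Fin k → B)) (A × (Fin k → B)) ℂ :=
    fun v => (c : ℂ) • ∑ m, T m v with hQdef
  have hQ : ∀ v (p q : A × (Fin k → B)),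
      Q v p q = (c : ℂ) * ∑ m, (ρ m)ᵀ p.1 q.1 * ∏ j, E m (v j) (p.2 j) (q.2 j) := by
    intro v p q
    simp [hQdef, hTdef, Matrix.sum_apply]
  set ρ0 : Matrix A A ℂ := (c : ℂ) • ∑ m, (ρ m)ᵀ with hρ0def
  refine ⟨ρ0, c, Q, ?_, ?_, hc0, le_of_eq (by rw [hcdef, one_div]), ?_, ?_, ?_, ?_, ?_, ?_, ?_⟩
  · exact psd_smul_real (psd_sum fun m _ => (hρpos m).transpose) hc0
  · have hMne : (Fintype.card M : ℂ) ≠ 0 := by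
      simp [Fintype.card_ne_zero]
    rw [hρ0def, Matrix.trace_smul, Matrix.trace_sum]
    simp only [Matrix.trace_transpose, hρtr, Finset.sum_const, Finset.card_univ,
      nsmul_eq_mul, mul_one, smul_eq_mul, hcdef]
    push_cast
    field_simp
  · ext p q
    rw [Matrix.sum_apply, Matrix.of_apply]
    simp_rw [hQ]
    rw [← Finset.mul_sum, Finset.sum_comm]
    have hm : ∀ m, ∑ v : Fin k → Fin 2, (ρ m)ᵀ p.1 q.1 * ∏ j, E m (v j) (p.2 j) (q.2 j)
        = (ρ m)ᵀ p.1 q.1 * (if p.2 = q.2 then 1 else 0) := by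
      intro m
      rw [← Finset.mul_sum, sum_pi_prod (fun j t => E m t (p.2 j) (q.2 j))]
      congr 1
      calc ∏ j, ∑ t, E m t (p.2 j) (q.2 j)
          = ∏ j, if p.2 j = q.2 j then (1:ℂ) else 0 :=
            Finset.prod_congr rfl fun j _ => hEsum_entry m _ _
        _ = _ := prod_delta' _ _
    simp_rw [hm]
    rw [← Finset.sum_mul, hρ0def]
    simp [Matrix.sum_apply, mul_assoc]
  · intro v
    simp only [hQdef, hTdef]
    exact psd_smul_real (psd_sum fun m _ =>
      psd_tensor_pi _ ((hρpos m).transpose) _ fun j => hEpos m (v j)) hc0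
  · intro v π
    ext p q
    rw [Matrix.of_apply, hQ, hQ]
    congr 1
    refine Finset.sum_congr rfl fun m _ => ?_
    congr 1
    exact Equiv.prod_comp π (fun j : Fin k => E m (v j) (p.2 j) (q.2 j))
  · intro v i hi1 hik
    have hPT : (Matrix.of fun p q : A × (Fin k → B) =>
        Q v (p.1, fun j => if (j : ℕ) < i then q.2 j else p.2 j)
            (q.1, fun j => if (j : ℕ) < i then p.2 j else q.2 j))
        = (c : ℂ) • ∑ m, Matrix.of fun p q : A × (Fin k → B) =>
            (ρ m)ᵀ p.1 q.1 *
              ∏ j : Fin k, (if (j : ℕ) < i then (E m (v j))ᵀ else E m (v j)) (p.2 j) (q.2 j) := by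
      ext p q
      rw [Matrix.of_apply, hQ]
      simp only [Matrix.smul_apply, Matrix.sum_apply, Matrix.of_apply, smul_eq_mul]
      congr 1
      refine Finset.sum_congr rfl fun m _ => ?_
      congr 1
      refine Finset.prod_congr rfl fun j _ => ?_
      by_cases hj : (j : ℕ) < i
      · simp [hj, Matrix.transpose_apply]
      · simp [hj]
    rw [hPT]
    refine psd_smul_real (psd_sum fun m _ => psd_tensor_pi _ ((hρpos m).transpose) _ fun j => ?_) hc0
    by_cases hj : (j : ℕ) < i
    · simp only [hj, if_true]
      exact (hEpos m (v j)).transpose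
    · simp only [hj, if_false]
      exact hEpos m (v j)
  · have hmain : (Matrix.of fun f f' : Fin k → B =>
        ∑ v ∈ Finset.univ.filter (fun v : Fin k → Fin 2 => v i0 = 0), ∑ a, Q v (a, f) (a, f'))
        = (c : ℂ) • (1 : Matrix (Fin k → B) (Fin k → B) ℂ) := by
      ext f f'
      rw [Matrix.of_apply]
      simp_rw [hQ]
      rw [sum_reorg (Finset.univ.filter (fun v : Fin k → Fin 2 => v i0 = 0)) (c : ℂ)
        (fun m a => (ρ m)ᵀ a a) (fun m v => ∏ j, E m (v j) (f j) (f' j))]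
      simp_rw [htrρ, one_mul]
      have hfilter : ∀ m, ∑ v ∈ Finset.univ.filter (fun v : Fin k → Fin 2 => v i0 = 0),
          ∏ j, E m (v j) (f j) (f' j)
          = Λ m (f i0) (f' i0) * ∏ j ∈ Finset.univ.erase i0,
              (if f j = f' j then (1 : ℂ) else 0) := by
        intro m
        rw [sum_pi_prod_filter i0 (fun j t => E m t (f j) (f' j)), hE0]
        congr 1
        exact Finset.prod_congr rfl fun j _ => hEsum_entry m _ _
      simp_rw [hfilter]
      rw [← Finset.sum_mul]
      have hΛentry : ∑ m, Λ m (f i0) (f' i0) = if f i0 = f' i0 then (1 : ℂ) else 0 := by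
        have h := congrFun (congrFun hΛsum (f i0)) (f' i0)
        simp only [Matrix.sum_apply] at h
        rw [h, Matrix.one_apply]
      rw [hΛentry]
      have hdel : (if f i0 = f' i0 then (1 : ℂ) else 0)
          * ∏ j ∈ Finset.univ.erase i0, (if f j = f' j then (1 : ℂ) else 0)
          = if f = f' then 1 else 0 := by
        rw [Finset.mul_prod_erase Finset.univ
          (fun j => if f j = f' j then (1 : ℂ) else 0) (Finset.mem_univ i0)]
        exact prod_delta' f f'
      rw [hdel]
      simp [Matrix.one_apply]
    rw [hmain, sub_self]
    exact Matrix.PosSemidef.zero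
  · intro u f f'
    have hBne : (Fintype.card B : ℂ) ≠ 0 := by
      simp [Fintype.card_ne_zero]
    set P : M → ℂ := fun m => ∏ j ∈ Finset.univ.erase iL, E m (u j) (f j) (f' j) with hPdef
    set δ : ℂ := if f iL = f' iL then 1 else 0 with hδdef
    -- splitting products over the updated coordinate
    have hsplit : ∀ m (vk : Fin 2),
        ∏ j, E m (Function.update u iL vk j) (f j) (f' j)
          = E m vk (f iL) (f' iL) * P m := by
      intro m vk
      rw [← Finset.mul_prod_erase Finset.univ _ (Finset.mem_univ iL), Function.update_self]
      congr 1
      exact Finset.prod_congr rfl fun j hj => by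
        rw [Function.update_of_ne (Finset.mem_erase.mp hj).1]
    have hsplit2 : ∀ m (vk : Fin 2) (b : B),
        ∏ j, E m (Function.update u iL vk j)
          (Function.update f iL b j) (Function.update f' iL b j)
          = E m vk b b * P m := by
      intro m vk b
      rw [← Finset.mul_prod_erase Finset.univ _ (Finset.mem_univ iL),
        Function.update_self, Function.update_self, Function.update_self]
      congr 1
      refine Finset.prod_congr rfl fun j hj => ?_
      have hne := (Finset.mem_erase.mp hj).1
      rw [Function.update_of_ne hne, Function.update_of_ne hne, Function.update_of_ne hne]
    -- LHS
    have hlhs : (∑ vk : Fin 2, ∑ a : A, Q (Function.update u iL vk) (a, f) (a, f'))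
        = (c : ℂ) * ∑ m, δ * P m := by
      simp_rw [hQ]
      rw [show (∑ vk : Fin 2, ∑ a : A, (c : ℂ) * ∑ m,
          (ρ m)ᵀ (a, f).1 (a, f').1 * ∏ j, E m (Function.update u iL vk j)
            ((a, f).2 j) ((a, f').2 j))
          = ∑ vk ∈ (Finset.univ : Finset (Fin 2)), ∑ a : A, (c : ℂ) * ∑ m,
            (fun m a => (ρ m)ᵀ a a) m a * (fun m vk => ∏ j, E m (Function.update u iL vk j)
              (f j) (f' j)) m vk from rfl]
      rw [sum_reorg]
      simp_rw [htrρ, one_mul, hsplit]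
      congr 1
      refine Finset.sum_congr rfl fun m _ => ?_
      rw [← Finset.sum_mul]
      congr 1
      rw [hEsum_entry]
    -- RHS inner sum
    have hrhs : (∑ vk : Fin 2, ∑ a : A, ∑ b : B,
          Q (Function.update u iL vk) (a, Function.update f iL b) (a, Function.update f' iL b))
        = (c : ℂ) * (Fintype.card B : ℂ) * ∑ m, P m := by
      simp_rw [hQ]
      have hb : ∀ (vk : Fin 2) (a : A), (∑ b : B, (c : ℂ) * ∑ m,
          (ρ m)ᵀ (a, Function.update f iL b).1 (a, Function.update f' iL b).1 *
            ∏ j, E m (Function.update u iL vk j)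
              ((a, Function.update f iL b).2 j) ((a, Function.update f' iL b).2 j))
          = (c : ℂ) * ∑ m, (ρ m)ᵀ a a * ((E m vk).trace * P m) := by
        intro vk a
        simp_rw [hsplit2]
        rw [← Finset.mul_sum]
        congr 1
        rw [show (∑ b : B, ∑ m, (ρ m)ᵀ a a * (E m vk b b * P m))
            = ∑ b : B, ∑ m, (fun m => (ρ m)ᵀ a a) m * (fun m b => E m vk b b * P m) m b
            from rfl]
        rw [sum_swap_mul]
        refine Finset.sum_congr rfl fun m _ => ?_
        rw [← Finset.sum_mul]
        congr 1
        all_goals simp [Matrix.trace, Matrix.diag]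
      simp_rw [hb]
      rw [show (∑ vk : Fin 2, ∑ a : A, (c : ℂ) * ∑ m, (ρ m)ᵀ a a * ((E m vk).trace * P m))
          = ∑ vk ∈ (Finset.univ : Finset (Fin 2)), ∑ a : A, (c : ℂ) * ∑ m,
            (fun m a => (ρ m)ᵀ a a) m a * (fun m vk => (E m vk).trace * P m) m vk from rfl]
      rw [sum_reorg]
      simp_rw [htrρ, one_mul]
      rw [Finset.mul_sum, Finset.mul_sum]
      refine Finset.sum_congr rfl fun m _ => ?_
      rw [← Finset.sum_mul, hEtr]
      ring
    rw [hlhs, hrhs, ← Finset.mul_sum]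
    field_simp
  · have hBne : (Fintype.card B : ℂ) ≠ 0 := by
      simp [Fintype.card_ne_zero]
    have hMne : (Fintype.card M : ℂ) ≠ 0 := by
      simp [Fintype.card_ne_zero]
    set SA : M → Fin 2 → ℂ := fun m t => ∑ p1 : A, ∑ q1 : A,
      (ρ m)ᵀ p1 q1 * ∑ b : B, ∑ b' : B, E m t b b' * Γ (q1, b') (p1, b) with hSAdef
    -- Step (a): trace formula for a single v
    have htrace : ∀ v : Fin k → Fin 2,
        (Q v * Matrix.of (fun p q : A × (Fin k → B) =>
          Γ (p.1, p.2 i0) (q.1, q.2 i0) * ∏ j ∈ Finset.univ.erase i0,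
            (if p.2 j = q.2 j then (1 : ℂ) else 0))).trace
        = (c : ℂ) * ∑ m, SA m (v i0) * ∏ j ∈ Finset.univ.erase i0, (E m (v j)).trace := by
      intro v
      have hterm : ∀ (p q : A × (Fin k → B)) (m : M),
          ((ρ m)ᵀ p.1 q.1 * ∏ j, E m (v j) (p.2 j) (q.2 j)) *
            (Γ (q.1, q.2 i0) (p.1, p.2 i0) * ∏ j ∈ Finset.univ.erase i0,
              (if q.2 j = p.2 j then (1 : ℂ) else 0))
          = (ρ m)ᵀ p.1 q.1 * ∏ j : Fin k,
              (if j = i0 then E m (v i0) (p.2 j) (q.2 j) * Γ (q.1, q.2 j) (p.1, p.2 j)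
               else E m (v j) (p.2 j) (q.2 j) * (if q.2 j = p.2 j then (1 : ℂ) else 0)) := by
        intro p q m
        rw [← Finset.mul_prod_erase Finset.univ
          (fun j : Fin k => (if j = i0 then E m (v i0) (p.2 j) (q.2 j) * Γ (q.1, q.2 j) (p.1, p.2 j)
               else E m (v j) (p.2 j) (q.2 j) * (if q.2 j = p.2 j then (1 : ℂ) else 0)))
          (Finset.mem_univ i0), if_pos rfl]
        rw [Finset.prod_congr rfl (fun j hj => if_neg (Finset.mem_erase.mp hj).1)]
        rw [Finset.prod_mul_distrib]
        rw [← Finset.mul_prod_erase Finset.univ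
          (fun j => E m (v j) (p.2 j) (q.2 j)) (Finset.mem_univ i0)]
        ring
      calc (Q v * Matrix.of (fun p q : A × (Fin k → B) =>
          Γ (p.1, p.2 i0) (q.1, q.2 i0) * ∏ j ∈ Finset.univ.erase i0,
            (if p.2 j = q.2 j then (1 : ℂ) else 0))).trace
          = ∑ p : A × (Fin k → B), ∑ q : A × (Fin k → B), Q v p q *
              (Γ (q.1, q.2 i0) (p.1, p.2 i0) * ∏ j ∈ Finset.univ.erase i0,
                (if q.2 j = p.2 j then (1 : ℂ) else 0)) := by
            simp [Matrix.trace, Matrix.diag, Matrix.mul_apply]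
        _ = ∑ p : A × (Fin k → B), ∑ q : A × (Fin k → B), (c : ℂ) * ∑ m,
              (ρ m)ᵀ p.1 q.1 * ∏ j : Fin k,
              (if j = i0 then E m (v i0) (p.2 j) (q.2 j) * Γ (q.1, q.2 j) (p.1, p.2 j)
               else E m (v j) (p.2 j) (q.2 j) * (if q.2 j = p.2 j then (1 : ℂ) else 0)) := by
            refine Finset.sum_congr rfl fun p _ => Finset.sum_congr rfl fun q _ => ?_
            rw [hQ, mul_assoc, Finset.sum_mul]
            congr 1
            exact Finset.sum_congr rfl fun m _ => hterm p q m
        _ = (c : ℂ) * ∑ m, ∑ p : A × (Fin k → B), ∑ q : A × (Fin k → B),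
              (ρ m)ᵀ p.1 q.1 * ∏ j : Fin k,
              (if j = i0 then E m (v i0) (p.2 j) (q.2 j) * Γ (q.1, q.2 j) (p.1, p.2 j)
               else E m (v j) (p.2 j) (q.2 j) * (if q.2 j = p.2 j then (1 : ℂ) else 0)) := by
            simp_rw [← Finset.mul_sum]
            congr 1
            exact (Finset.sum_congr rfl fun p _ => Finset.sum_comm).trans Finset.sum_comm
        _ = (c : ℂ) * ∑ m, SA m (v i0) * ∏ j ∈ Finset.univ.erase i0, (E m (v j)).trace := by
            congr 1
            refine Finset.sum_congr rfl fun m _ => ?_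
            calc ∑ p : A × (Fin k → B), ∑ q : A × (Fin k → B),
                  (ρ m)ᵀ p.1 q.1 * ∏ j : Fin k,
                  (if j = i0 then E m (v i0) (p.2 j) (q.2 j) * Γ (q.1, q.2 j) (p.1, p.2 j)
                   else E m (v j) (p.2 j) (q.2 j) * (if q.2 j = p.2 j then (1 : ℂ) else 0))
                = ∑ p1 : A, ∑ q1 : A, ∑ p2 : Fin k → B, ∑ q2 : Fin k → B,
                  (ρ m)ᵀ p1 q1 * ∏ j : Fin k,
                  (if j = i0 then E m (v i0) (p2 j) (q2 j) * Γ (q1, q2 j) (p1, p2 j)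
                   else E m (v j) (p2 j) (q2 j) * (if q2 j = p2 j then (1 : ℂ) else 0)) := by
                  simp_rw [Fintype.sum_prod_type]
                  exact Finset.sum_congr rfl fun p1 _ => Finset.sum_comm
              _ = ∑ p1 : A, ∑ q1 : A, (ρ m)ᵀ p1 q1 *
                    ((∑ b : B, ∑ b' : B, E m (v i0) b b' * Γ (q1, b') (p1, b)) *
                      ∏ j ∈ Finset.univ.erase i0, (E m (v j)).trace) := by
                  refine Finset.sum_congr rfl fun p1 _ => Finset.sum_congr rfl fun q1 _ => ?_
                  simp_rw [← Finset.mul_sum]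
                  congr 1
                  rw [sum_pi_pi_prod (fun j b b' =>
                    if j = i0 then E m (v i0) b b' * Γ (q1, b') (p1, b)
                    else E m (v j) b b' * (if b' = b then (1 : ℂ) else 0))]
                  rw [← Finset.mul_prod_erase Finset.univ (fun j : Fin k =>
                    ∑ b : B, ∑ b' : B, (if j = i0 then E m (v i0) b b' * Γ (q1, b') (p1, b)
                      else E m (v j) b b' * (if b' = b then (1 : ℂ) else 0)))
                    (Finset.mem_univ i0)]
                  refine congrArg₂ (· * ·) (by simp)
                    (Finset.prod_congr rfl fun j hj => ?_)
                  have hne := (Finset.mem_erase.mp hj).1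
                  simp [hne, Matrix.trace, Matrix.diag, mul_ite, mul_one, mul_zero]
              _ = SA m (v i0) * ∏ j ∈ Finset.univ.erase i0, (E m (v j)).trace := by
                  simp only [hSAdef]
                  simp_rw [← mul_assoc, ← Finset.sum_mul]
    have hcard_erase : ((Finset.univ : Finset (Fin k)).erase i0).card = k - 1 := by
      rw [Finset.card_erase_of_mem (Finset.mem_univ i0), Finset.card_univ, Fintype.card_fin]
    have hstep : ∑ v ∈ Finset.univ.filter (fun v : Fin k → Fin 2 => v i0 = 0),
        (Q v * Matrix.of (fun p q : A × (Fin k → B) =>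
          Γ (p.1, p.2 i0) (q.1, q.2 i0) * ∏ j ∈ Finset.univ.erase i0,
            (if p.2 j = q.2 j then (1 : ℂ) else 0))).trace
        = (c : ℂ) * ∑ m, SA m 0 * (Fintype.card B : ℂ) ^ (k - 1) := by
      simp_rw [htrace]
      rw [← Finset.mul_sum]
      congr 1
      rw [Finset.sum_comm]
      refine Finset.sum_congr rfl fun m _ => ?_
      have hform : ∀ v : Fin k → Fin 2,
          SA m (v i0) * ∏ j ∈ Finset.univ.erase i0, (E m (v j)).trace
          = ∏ j : Fin k, (if j = i0 then SA m (v j) else (E m (v j)).trace) := by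
        intro v
        rw [← Finset.mul_prod_erase Finset.univ
          (fun j => if j = i0 then SA m (v j) else (E m (v j)).trace) (Finset.mem_univ i0)]
        refine congrArg₂ (· * ·) (by simp)
          (Finset.prod_congr rfl fun j hj => by simp [(Finset.mem_erase.mp hj).1])
      rw [Finset.sum_congr rfl fun v _ => hform v]
      rw [sum_pi_prod_filter i0 (fun j t => if j = i0 then SA m t else (E m t).trace)]
      rw [if_pos rfl]
      congr 1
      calc ∏ j ∈ Finset.univ.erase i0, (∑ t : Fin 2, if j = i0 then SA m t else (E m t).trace)
          = ∏ _j ∈ Finset.univ.erase i0, (Fintype.card B : ℂ) :=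
            Finset.prod_congr rfl fun j hj => by simp [(Finset.mem_erase.mp hj).1, hEtr m]
        _ = (Fintype.card B : ℂ) ^ (k - 1) := by rw [Finset.prod_const, hcard_erase]
    have hSA0 : ∀ m, SA m 0 = (((ρ m)ᵀ ⊗ₖ Λ m) * Γ).trace := by
      intro m
      have h1 : (((ρ m)ᵀ ⊗ₖ Λ m) * Γ).trace
          = ∑ p1 : A, ∑ b : B, ∑ q1 : A, ∑ b' : B,
            ((ρ m)ᵀ p1 q1 * Λ m b b') * Γ (q1, b') (p1, b) := by
        simp [Matrix.trace, Matrix.diag, Matrix.mul_apply, Fintype.sum_prod_type,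
          Matrix.kroneckerMap_apply]
      rw [h1]
      have h2 : ∀ p1 : A, (∑ b : B, ∑ q1 : A, ∑ b' : B,
            ((ρ m)ᵀ p1 q1 * Λ m b b') * Γ (q1, b') (p1, b))
          = ∑ q1 : A, ∑ b : B, ∑ b' : B,
            ((ρ m)ᵀ p1 q1 * Λ m b b') * Γ (q1, b') (p1, b) := fun p1 => Finset.sum_comm
      simp_rw [h2, hSAdef]
      refine Finset.sum_congr rfl fun p1 _ => Finset.sum_congr rfl fun q1 _ => ?_
      rw [Finset.mul_sum]
      refine Finset.sum_congr rfl fun b _ => ?_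
      rw [Finset.mul_sum]
      refine Finset.sum_congr rfl fun b' _ => ?_
      show (ρ m)ᵀ p1 q1 * (E m 0 b b' * Γ (q1, b') (p1, b)) = _
      rw [hE0]
      ring
    rw [hstep]
    simp_rw [hSA0]
    have hval : ((Fintype.card B : ℂ) ^ (k - 1))⁻¹ *
        ((c : ℂ) * ∑ m, (((ρ m)ᵀ ⊗ₖ Λ m) * Γ).trace * (Fintype.card B : ℂ) ^ (k - 1))
        = (c : ℂ) * ∑ m, (((ρ m)ᵀ ⊗ₖ Λ m) * Γ).trace := by
      rw [← Finset.sum_mul]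
      field_simp
    rw [hval]
    have hb : (Fintype.card M) • ((1 : ℂ) - ε) ≤ ∑ m, (((ρ m)ᵀ ⊗ₖ Λ m) * Γ).trace := by
      have := Finset.card_nsmul_le_sum Finset.univ
        (fun m => (((ρ m)ᵀ ⊗ₖ Λ m) * Γ).trace) ((1 : ℂ) - ε) (fun m _ => herr m)
      simpa using this
    have hcpos : (0 : ℂ) ≤ (c : ℂ) := Complex.zero_le_real.mpr hc0
    calc (1 - ε : ℂ) = (c : ℂ) * ((Fintype.card M : ℂ) * (1 - ε)) := by
          rw [← mul_assoc, hcdef]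
          push_cast
          rw [inv_mul_cancel₀ hMne, one_mul]
      _ ≤ (c : ℂ) * ∑ m, (((ρ m)ᵀ ⊗ₖ Λ m) * Γ).trace := by
          refine mul_le_mul_of_nonneg_left ?_ hcpos
          simpa [nsmul_eq_mul] using hb
end
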